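/- arXiv:1509.02209 — 11 statements merged into one kernel-verified Lean document; each statement's English description precedes it below -/
import Mathlib

section
/- Let b ≥ 1 be a natural number and let x : ℕ → ℚ be the sequence x(n) = b^(n-1) for n ≥ 1. Then for every m ≥ 0 and every n ≥ 1, the m-th invert transform of x satisfies (𝒴^m x)(n) = (b+m)^(n-1). In particular, the invert transform of (b^(n-1))_{n≥1} is ((b+1)^(n-1))_{n≥1}. -/
/-- The invert transform of a sequence `x : ℕ → ℚ` (indexed from 1, `x 0` ignored):
`(𝒴x)(0) = 0` and `(𝒴x)(n) = x n + ∑_{j=1}^{n-1} x j * (𝒴x)(n-j)` for `n ≥ 1`. -/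
def invert (x : ℕ → ℚ) : ℕ → ℚ
  | 0 => 0
  | n + 1 => x (n + 1) + ∑ j ∈ Finset.range n, x (j + 1) * invert x (n - j)
  termination_by n => n
  decreasing_by omega

/-- The partial Bell polynomial `B_{n,k}(z₁, z₂, …)`, evaluated at a sequence of rationals
`z` (indexed from 1, `z 0` ignored): the sum over all finitely supported `α : ℕ → ℕ` with
`α 0 = 0`, `∑ i, α i = k` and `∑ i, i * α i = n` of `(n! / ∏ i, (α i)!) * ∏ i (z i / i!)^(α i)`. -/
def partialBell (n k : ℕ) (z : ℕ → ℚ) : ℚ :=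
  ∑ α ∈ ((Finset.range (n + 1)).finsuppAntidiag k).filter
      (fun α => (∑ i ∈ Finset.range (n + 1), i * α i) = n ∧ α 0 = 0),
    ((n.factorial : ℚ) / ∏ i ∈ Finset.range (n + 1), ((α i).factorial : ℚ)) *
      ∏ i ∈ Finset.range (n + 1), (z i / (i.factorial : ℚ)) ^ α i

lemma invert_key (c : ℚ) (x : ℕ → ℚ) (hx : ∀ n, 1 ≤ n → x n = c ^ (n - 1)) :
    ∀ n, 1 ≤ n → invert x n = (c + 1) ^ (n - 1) := by
  intro n
  induction n using Nat.strong_induction_on with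
  | _ n ih =>
    intro hn
    obtain ⟨k, rfl⟩ : ∃ k, n = k + 1 := ⟨n - 1, by omega⟩
    rw [invert]
    have h1 : ∀ j ∈ Finset.range k, x (j + 1) * invert x (k - j) = c ^ j * (c + 1) ^ (k - 1 - j) := by
      intro j hj
      simp only [Finset.mem_range] at hj
      rw [hx (j + 1) (by omega), ih (k - j) (by omega) (by omega)]
      congr 2 <;> omega
    rw [Finset.sum_congr rfl h1, hx (k + 1) (by omega)]
    have := geom_sum₂_mul c (c + 1) k
    simp only [show c - (c + 1) = -1 by ring] at this
    have hsum : (∑ i ∈ Finset.range k, c ^ i * (c + 1) ^ (k - 1 - i)) = (c + 1) ^ k - c ^ k := by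
      linarith [this]
    simp only [Nat.add_sub_cancel]
    rw [hsum]; ring

/-- The invert transform of `x n = b^(n-1)` (for `b ≥ 1`), iterated `m` times, is
`n ↦ (b+m)^(n-1)`; in particular (`m = 1`) the invert transform of `(b^(n-1))` is
`((b+1)^(n-1))`. -/
theorem stmt_0 (b : ℕ) (hb : 1 ≤ b) (x : ℕ → ℚ)
    (hx : ∀ n, 1 ≤ n → x n = (b : ℚ) ^ (n - 1)) :
    ∀ m n, 1 ≤ n → (invert^[m] x) n = ((b : ℚ) + (m : ℚ)) ^ (n - 1) := by
  intro m
  induction m with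
  | zero => simpa using hx
  | succ m ih =>
    intro n hn
    rw [Function.iterate_succ_apply']
    have := invert_key ((b : ℚ) + m) (invert^[m] x) ih n hn
    rw [this]
    push_cast
    ring_nf
end

section
/- Let x : ℕ → ℚ be a sequence with x(0) = 0 and let X(t) = Σ_{n≥1} x(n) tⁿ be its generating formal power series over ℚ. Then for every m ≥ 1, the generating function of the m-th invert transform of x satisfies Σ_{n≥1} (𝒴^m x)(n) tⁿ = X(t) · (1 − m·X(t))⁻¹; equivalently, 𝒴^m(x) = (1/m)·𝒴(m·x). -/
/-!
Writing `Y` for the generating function of `𝒴x`, the defining recursion says exactly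
`Y * (1 - X) = X`. Iterating, if `Y_m * (1 - m X) = X` then `Y_m` has constant term `0` and
`Y_{m+1} * (1 - Y_m) = Y_m`; multiplying out by `1 - m X` gives `Y_{m+1} * (1 - (m+1) X) = X`.
Inverting `1 - m X`, which has constant term `1`, gives `Y_m = X (1 - m X)⁻¹`; the case `m = 1`
applied to `m x` then shows that `𝒴(m x)` has generating function `m Y_m`.
-/

open PowerSeries

@[simp]
lemma invert_zero (x : ℕ → ℚ) : invert x 0 = 0 := by
  simp [invert]

lemma iterate_invert_apply_zero (x : ℕ → ℚ) (hx : x 0 = 0) (m : ℕ) : invert^[m] x 0 = 0 := by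
  cases m with
  | zero => exact hx
  | succ m => rw [Function.iterate_succ_apply', invert_zero]

lemma mk_invert_mul_one_sub (x : ℕ → ℚ) (hx : x 0 = 0) :
    mk (invert x) * (1 - mk x) = mk x := by
  ext n
  rw [mul_sub, mul_one, map_sub]
  cases n with
  | zero => simp [hx, coeff_mul]
  | succ n =>
    rw [mul_comm, coeff_mul, Finset.Nat.sum_antidiagonal_eq_sum_range_succ_mk]
    simp only [coeff_mk]
    rw [Finset.sum_range_succ', Finset.sum_range_succ]
    simp only [Nat.succ_sub_succ, hx, zero_mul, add_zero, Nat.sub_self, invert_zero, mul_zero]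
    rw [invert]
    ring

lemma mk_iterate_invert_mul_one_sub (x : ℕ → ℚ) (hx : x 0 = 0) (m : ℕ) :
    mk (invert^[m] x) * (1 - C (m : ℚ) * mk x) = mk x := by
  induction m with
  | zero => simp
  | succ m ih =>
    have step := mk_invert_mul_one_sub (invert^[m] x) (iterate_invert_apply_zero x hx m)
    rw [Function.iterate_succ_apply', Nat.cast_succ, map_add, map_one]
    linear_combination (1 - C (m : ℚ) * mk x) * step + (1 + mk (invert (invert^[m] x))) * ih

lemma mk_iterate_invert (x : ℕ → ℚ) (hx : x 0 = 0) (m : ℕ) :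
    mk (invert^[m] x) = mk x * (1 - C (m : ℚ) * mk x)⁻¹ :=
  (eq_mul_inv_iff_mul_eq (by simp [hx])).2 (mk_iterate_invert_mul_one_sub x hx m)

/-- For `x : ℕ → ℚ` with `x 0 = 0` and every `m ≥ 1`, the generating function of the
`m`-th invert transform of `x` is `X(t) * (1 - m·X(t))⁻¹`; equivalently,
`𝒴^m(x) = (1/m)·𝒴(m·x)`. -/
theorem stmt_1 (x : ℕ → ℚ) (hx : x 0 = 0) (m : ℕ) (hm : 1 ≤ m) :
    PowerSeries.mk (invert^[m] x)
        = PowerSeries.mk x * (1 - PowerSeries.C (m : ℚ) * PowerSeries.mk x)⁻¹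
      ∧ ∀ n, (invert^[m] x) n = (1 / (m : ℚ)) * invert (fun j => (m : ℚ) * x j) n := by
  refine ⟨mk_iterate_invert x hx m, fun n => ?_⟩
  have h_mk_mx : mk (fun j => (m : ℚ) * x j) = C (m : ℚ) * mk x := by
    ext k
    rw [coeff_C_mul, coeff_mk, coeff_mk]
  have h := mk_iterate_invert (fun j => (m : ℚ) * x j) (by simp [hx]) 1
  rw [Function.iterate_one, Nat.cast_one, map_one, one_mul, h_mk_mx, mul_assoc,
    ← mk_iterate_invert x hx m] at h
  have h_coeff := congrArg (coeff n) h
  simp only [coeff_mk, coeff_C_mul] at h_coeff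
  have hm' : (m : ℚ) ≠ 0 := by positivity
  rw [h_coeff]
  field_simp
end

section
/- Let x, w : ℕ → ℚ be sequences with 0 ≤ x(n) ≤ w(n) for all n ≥ 1. Then for every m ≥ 0 and every n ≥ 1, 0 ≤ (𝒴^m x)(n) ≤ (𝒴^m w)(n). In particular, if b ≥ 1 and 0 ≤ x(n) ≤ b^(n-1) for all n ≥ 1, then (𝒴^m x)(n) ≤ (b+m)^(n-1) for all m ≥ 0 and n ≥ 1. -/
lemma invert_succ (x : ℕ → ℚ) (n : ℕ) :
    invert x (n + 1) = x (n + 1) + ∑ j ∈ Finset.range n, x (j + 1) * invert x (n - j) := by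
  rw [invert]

lemma invert_mono (x w : ℕ → ℚ) (h : ∀ n, 1 ≤ n → 0 ≤ x n ∧ x n ≤ w n) :
    ∀ n, 0 ≤ invert x n ∧ invert x n ≤ invert w n := by
  intro n
  induction n using Nat.strong_induction_on with
  | _ n ih =>
    match n with
    | 0 => simp [invert]
    | n + 1 =>
      rw [invert_succ, invert_succ]
      constructor
      · have h1 := (h (n+1) (by omega)).1
        have h2 : (0:ℚ) ≤ ∑ j ∈ Finset.range n, x (j + 1) * invert x (n - j) := by
          apply Finset.sum_nonneg
          intro j hj
          exact mul_nonneg (h (j+1) (by omega)).1 (ih (n - j) (by omega)).1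
        linarith
      · apply add_le_add (h (n+1) (by omega)).2
        apply Finset.sum_le_sum
        intro j hj
        have hxj := h (j+1) (by omega)
        have hij := ih (n - j) (by omega)
        exact mul_le_mul hxj.2 hij.2 hij.1 (le_trans hxj.1 hxj.2)

lemma invert_congr (x x' : ℕ → ℚ) (h : ∀ k, 1 ≤ k → x k = x' k) :
    ∀ n, invert x n = invert x' n := by
  intro n
  induction n using Nat.strong_induction_on with
  | _ n ih =>
    match n with
    | 0 => simp [invert]
    | n + 1 =>
      rw [invert_succ, invert_succ, h (n+1) (by omega)]
      congr 1
      apply Finset.sum_congr rfl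
      intro j hj
      rw [h (j+1) (by omega), ih (n - j) (by omega)]

lemma invert_iter_congr (x x' : ℕ → ℚ) (h : ∀ k, 1 ≤ k → x k = x' k) :
    ∀ m n, 1 ≤ n → invert^[m] x n = invert^[m] x' n := by
  intro m
  induction m with
  | zero => intro n hn; exact h n hn
  | succ m ih =>
    intro n hn
    rw [Function.iterate_succ_apply', Function.iterate_succ_apply']
    apply invert_congr
    intro k hk
    exact ih k hk
  -- goal is invert (invert^[m] x) n = invert (invert^[m] x') n; invert_congr needs agreement on ≥1, given by ih.

lemma invert_geom (c : ℚ) : ∀ n, 1 ≤ n → invert (fun k => c ^ (k - 1)) n = (c + 1) ^ (n - 1) := by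
  intro n
  induction n using Nat.strong_induction_on with
  | _ n ih =>
    match n with
    | 0 => omega
    | n + 1 =>
      intro _
      rw [invert_succ]
      simp only [Nat.add_sub_cancel]
      have hsum : ∑ j ∈ Finset.range n, c ^ j * invert (fun k => c ^ (k - 1)) (n - j)
          = ∑ j ∈ Finset.range n, c ^ j * (c + 1) ^ (n - 1 - j) := by
        apply Finset.sum_congr rfl
        intro j hj
        rw [Finset.mem_range] at hj
        rw [ih (n - j) (by omega) (by omega)]
        congr 2
        omega
      rw [hsum]
      have := geom_sum₂_mul c (c + 1) n
      have h2 : (∑ i ∈ Finset.range n, c ^ i * (c + 1) ^ (n - 1 - i)) = (c+1)^n - c^n := by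
        have h3 : c - (c + 1) = -1 := by ring
        rw [h3] at this
        linarith [this]
      rw [h2]; ring

lemma invert_iter_geom (c : ℚ) : ∀ m n, 1 ≤ n →
    invert^[m] (fun k => c ^ (k - 1)) n = (c + m) ^ (n - 1) := by
  intro m
  induction m generalizing c with
  | zero => intro n hn; simp
  | succ m ih =>
    intro n hn
    rw [Function.iterate_succ_apply]
    have h1 : invert^[m] (invert (fun k => c ^ (k - 1))) n
        = invert^[m] (fun k => (c + 1) ^ (k - 1)) n :=
      invert_iter_congr _ _ (fun k hk => invert_geom c k hk) m n hn
    rw [h1, ih (c + 1) n hn]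
    push_cast
    ring_nf


/-- If `0 ≤ x n ≤ w n` for all `n ≥ 1`, then `0 ≤ (𝒴^m x) n ≤ (𝒴^m w) n` for all `m ≥ 0`
and `n ≥ 1`. In particular, if `b ≥ 1` and `0 ≤ y n ≤ b^(n-1)` for all `n ≥ 1`, then
`(𝒴^m y) n ≤ (b+m)^(n-1)`. -/
theorem stmt_2 :
    (∀ x w : ℕ → ℚ, (∀ n, 1 ≤ n → 0 ≤ x n ∧ x n ≤ w n) →
      ∀ m n, 1 ≤ n → 0 ≤ (invert^[m] x) n ∧ (invert^[m] x) n ≤ (invert^[m] w) n)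
    ∧ (∀ y : ℕ → ℚ, ∀ b : ℕ, 1 ≤ b →
        (∀ n, 1 ≤ n → 0 ≤ y n ∧ y n ≤ (b : ℚ) ^ (n - 1)) →
        ∀ m n, 1 ≤ n → (invert^[m] y) n ≤ ((b : ℚ) + (m : ℚ)) ^ (n - 1)) := by
  have main : ∀ x w : ℕ → ℚ, (∀ n, 1 ≤ n → 0 ≤ x n ∧ x n ≤ w n) →
      ∀ m n, 1 ≤ n → 0 ≤ (invert^[m] x) n ∧ (invert^[m] x) n ≤ (invert^[m] w) n := by
    intro x w h m
    induction m generalizing x w with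
    | zero => intro n hn; exact h n hn
    | succ m ih =>
      intro n hn
      rw [Function.iterate_succ_apply, Function.iterate_succ_apply]
      apply ih
      · intro k hk; exact invert_mono x w h k
      · exact hn
  constructor
  · exact main
  · intro y b hb hy m n hn
    have h1 := (main y (fun k => (b:ℚ) ^ (k - 1)) hy m n hn).2
    rw [invert_iter_geom (b:ℚ) m n hn] at h1
    exact h1
end

section
/- Let x : ℕ → ℚ be a sequence. For every n ≥ 1, the invert transform of x satisfies (𝒴x)(n) = Σ_{k=1}^{n} (k!/n!) · B_{n,k}(1!·x(1), 2!·x(2), 3!·x(3), …). -/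
/-!
Let `X(t) = ∑_{i ≥ 1} x i tⁱ` and `Y(t) = ∑ (𝒴x)(n) tⁿ`. The recursion defining `𝒴x` says
`Y = X (1 + Y)`, so `1 + Y = ∑_{k < N} Xᵏ + X^N (1 + Y)` for every `N`; since `t^N ∣ X^N`,
taking `N = n + 1` gives `(𝒴x)(n) = ∑_{k=1}^n [tⁿ] Xᵏ`. Applying the multinomial theorem to the
truncation of `X` below degree `n + 1`, `[tⁿ] Xᵏ = ∑_α (k! / ∏ αᵢ!) ∏ x_i ^ αᵢ` over `α` with
`∑ αᵢ = k` and `∑ i αᵢ = n`, which is `(k!/n!) B_{n,k}(1!·x 1, 2!·x 2, …)`.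
-/

open Finset PowerSeries

theorem Finset.sum_finsuppAntidiag_eq_sum_piAntidiag {ι μ M : Type*} [DecidableEq ι]
    [AddCommMonoid μ] [HasAntidiagonal μ] [DecidableEq μ] [AddCommMonoid M]
    (s : Finset ι) (k : μ) (F : (ι → μ) → M) :
    ∑ α ∈ s.finsuppAntidiag k, F α = ∑ f ∈ s.piAntidiag k, F f := by
  rw [finsuppAntidiag, sum_map, ← sum_attach (s.piAntidiag k)]
  rfl

namespace PowerSeries

section CommSemiring

variable {R : Type*} [CommSemiring R]

theorem coeff_pow_eq_coeff_trunc_pow (φ : R⟦X⟧) (n k : ℕ) :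
    coeff n (φ ^ k) = (trunc (n + 1) φ ^ k).coeff n := by
  have h := congrArg (fun p : Polynomial R => p.coeff n) (trunc_trunc_pow φ (n + 1) k)
  simp only [coeff_trunc, if_pos n.lt_succ_self, ← Polynomial.coe_pow,
    Polynomial.coeff_coe] at h
  exact h.symm

theorem coeff_pow_eq_sum_finsuppAntidiag (φ : R⟦X⟧) (n k : ℕ) :
    coeff n (φ ^ k) = ∑ α ∈ (finsuppAntidiag (range (n + 1)) k).filter
        (fun α => ∑ i ∈ range (n + 1), i * α i = n),
      Nat.multinomial (range (n + 1)) α * ∏ i ∈ range (n + 1), coeff i φ ^ α i := by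
  have prod_monomial_pow : ∀ f : ℕ → ℕ,
      ∏ i ∈ range (n + 1), Polynomial.monomial i (coeff i φ) ^ f i =
        Polynomial.C (∏ i ∈ range (n + 1), coeff i φ ^ f i) *
          Polynomial.X ^ (∑ i ∈ range (n + 1), i * f i) := by
    intro f
    simp only [← Polynomial.C_mul_X_pow_eq_monomial, mul_pow, prod_mul_distrib, ← map_pow,
      ← map_prod, ← pow_mul, prod_pow_eq_pow_sum]
  rw [coeff_pow_eq_coeff_trunc_pow, trunc_apply, ← range_eq_Ico, sum_pow_eq_sum_piAntidiag,
    Polynomial.finsetSum_coeff, ← sum_finsuppAntidiag_eq_sum_piAntidiag, sum_filter]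
  refine sum_congr rfl fun α _ => ?_
  rw [prod_monomial_pow, Polynomial.coeff_natCast_mul, Polynomial.coeff_C_mul_X_pow, mul_ite,
    mul_zero]
  exact if_congr eq_comm rfl rfl

end CommSemiring

section CommRing

variable {R : Type*} [CommRing R]

theorem eq_sum_pow_add_of_eq_one_add_mul {F φ : R⟦X⟧} (h : F = 1 + φ * F) (N : ℕ) :
    F = ∑ k ∈ range N, φ ^ k + φ ^ N * F := by
  induction N with
  | zero => simp
  | succ N ih =>
    rw [sum_range_succ, pow_succ, mul_assoc]
    linear_combination ih + φ ^ N * h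

theorem coeff_eq_sum_coeff_pow_of_eq_one_add_mul {F φ : R⟦X⟧} (hφ : X ∣ φ)
    (h : F = 1 + φ * F) (n : ℕ) :
    coeff n F = ∑ k ∈ range (n + 1), coeff n (φ ^ k) := by
  obtain ⟨ψ, rfl⟩ := hφ
  conv_lhs => rw [eq_sum_pow_add_of_eq_one_add_mul h (n + 1)]
  rw [map_add, map_sum, mul_pow, mul_assoc, coeff_X_pow_mul', if_neg (by omega), add_zero]

end CommRing

end PowerSeries

noncomputable def genFun (x : ℕ → ℚ) : ℚ⟦X⟧ := X * PowerSeries.mk (fun i => x (i + 1))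

theorem coeff_genFun (x : ℕ → ℚ) (i : ℕ) : coeff i (genFun x) = if i = 0 then 0 else x i := by
  cases i <;> simp [genFun]

theorem mk_invert (x : ℕ → ℚ) :
    PowerSeries.mk (invert x) = genFun x * (1 + PowerSeries.mk (invert x)) := by
  ext n
  cases n with
  | zero => simp [invert, genFun]
  | succ n =>
    rw [coeff_mk, invert, genFun, mul_assoc, coeff_succ_X_mul, mul_add, mul_one, map_add,
      coeff_mk, coeff_mul, Finset.Nat.sum_antidiagonal_eq_sum_range_succ_mk, sum_range_succ]
    simp [invert]

theorem invert_eq_sum_coeff_genFun_pow (x : ℕ → ℚ) (n : ℕ) :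
    invert x n = ∑ k ∈ Icc 1 n, coeff n (genFun x ^ k) := by
  have h := coeff_eq_sum_coeff_pow_of_eq_one_add_mul (dvd_mul_right X _ : X ∣ genFun x)
    (congrArg (1 + ·) (mk_invert x)) n
  rw [map_add, coeff_mk, range_eq_Ico, sum_eq_sum_Ico_succ_bot (by omega), pow_zero, zero_add,
    Ico_add_one_right_eq_Icc] at h
  exact add_left_cancel h

theorem prod_coeff_genFun_pow (x : ℕ → ℚ) (n : ℕ) {f : ℕ → ℕ} (hf : f 0 = 0) :
    ∏ i ∈ range (n + 1), coeff i (genFun x) ^ f i = ∏ i ∈ range (n + 1), x i ^ f i :=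
  prod_congr rfl fun i _ => by rcases eq_or_ne i 0 with rfl | hi <;> simp [coeff_genFun, *]

theorem coeff_genFun_pow (x : ℕ → ℚ) (n k : ℕ) :
    coeff n (genFun x ^ k) =
      (k.factorial / n.factorial : ℚ) * partialBell n k (fun i => i.factorial * x i) := by
  rw [partialBell, coeff_pow_eq_sum_finsuppAntidiag, mul_sum, sum_filter, sum_filter]
  refine sum_congr rfl fun α hα => ?_
  by_cases hn : ∑ i ∈ range (n + 1), i * α i = n
  swap
  · simp [hn]
  by_cases h0 : α 0 = 0
  swap
  · rw [if_pos hn, prod_eq_zero (mem_range.2 n.succ_pos) (by simp [coeff_genFun, h0]),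
      if_neg (by tauto), mul_zero]
  rw [if_pos hn, if_pos ⟨hn, h0⟩, prod_coeff_genFun_pow x n h0]
  have hk : (∏ i ∈ range (n + 1), ((α i).factorial : ℚ)) * Nat.multinomial (range (n + 1)) α =
      k.factorial := by
    rw [← (mem_finsuppAntidiag.1 hα).1]
    exact_mod_cast Nat.multinomial_spec _ _
  have hfac : ∀ i : ℕ, (i.factorial : ℚ) ≠ 0 := fun i => Nat.cast_ne_zero.2 i.factorial_ne_zero
  simp only [mul_div_cancel_left₀ _ (hfac _)]
  rw [← hk]
  field_simp [prod_ne_zero_iff.2 fun i _ => hfac (α i)]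

theorem stmt_3_general (x : ℕ → ℚ) (n : ℕ) :
    invert x n
      = ∑ k ∈ Finset.Icc 1 n,
          ((k.factorial : ℚ) / (n.factorial : ℚ)) *
            partialBell n k (fun i => (i.factorial : ℚ) * x i) := by
  rw [invert_eq_sum_coeff_genFun_pow]
  exact sum_congr rfl fun k _ => coeff_genFun_pow x n k

/-- For every `n ≥ 1`, `(𝒴x)(n) = ∑_{k=1}^n (k!/n!) · B_{n,k}(1!·x 1, 2!·x 2, …)`. -/
theorem stmt_3 (x : ℕ → ℚ) (n : ℕ) (hn : 1 ≤ n) :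
    invert x n
      = ∑ k ∈ Finset.Icc 1 n,
          ((k.factorial : ℚ) / (n.factorial : ℚ)) *
            partialBell n k (fun i => (i.factorial : ℚ) * x i) :=
  stmt_3_general x n
end

section
/- Let f₀ : ℕ → ℕ be a sequence of nonnegative integers. For every n ≥ 1, the sum over all compositions c = (j₁, …, j_k) of n (i.e., all lists of positive integers with j₁ + ⋯ + j_k = n) of the product f₀(j₁)·f₀(j₂)⋯f₀(j_k) equals (𝒴f₀)(n), the n-th term of the invert transform of f₀. (Combinatorially, this sum counts the words of length n obtained by concatenating, for each j, blocks chosen from a fixed set of f₀(j) blocks of length j.) -/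
/-!
Splitting off the first block `j + 1` of a composition of `n + 1` leaves an arbitrary composition
of `n - j`, so the sums `S n` of block products satisfy `S (n + 1) = ∑_{j ≤ n} x (j + 1) * S (n - j)`
with `S 0 = 1` (the empty composition). For `n ≥ 1` this is exactly the recursion defining the
invert transform, the term `j = n` supplying the summand `x (n + 1)`.
-/

open Finset

namespace Composition

lemma blocks_ne_nil_of_succ {n : ℕ} (c : Composition (n + 1)) : c.blocks ≠ [] :=
  c.blocks_eq_nil.not.2 n.succ_ne_zero

/-- The index `j` encodes the first block `j + 1`. -/
def firstBlockEquiv (n : ℕ) : Composition (n + 1) ≃ Σ j : Fin (n + 1), Composition (n - j) where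
  toFun c :=
    have hc := c.blocks_ne_nil_of_succ
    have hhead := c.one_le_blocks (List.head_mem hc)
    have hsum : c.blocks.head hc + c.blocks.tail.sum = n + 1 := by
      rw [← List.sum_cons, List.cons_head_tail, c.blocks_sum]
    ⟨⟨c.blocks.head hc - 1, by omega⟩,
      ⟨c.blocks.tail, fun hi => c.blocks_pos (List.mem_of_mem_tail hi), by simp only; omega⟩⟩
  invFun jc :=
    ⟨(jc.1 + 1) :: jc.2.blocks,
      by simpa using fun _ hi => jc.2.blocks_pos hi,
      by simp only [List.sum_cons, jc.2.blocks_sum]; omega⟩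
  left_inv c := by
    have hc := c.blocks_ne_nil_of_succ
    have hhead := c.one_le_blocks (List.head_mem hc)
    ext1
    conv_rhs => rw [← List.cons_head_tail hc]
    simp only [Nat.sub_add_cancel hhead]
  right_inv _ := rfl

lemma firstBlockEquiv_fst_add_one {n : ℕ} (c : Composition (n + 1)) :
    ((firstBlockEquiv n c).1 : ℕ) + 1 = c.blocks.head c.blocks_ne_nil_of_succ :=
  Nat.sub_add_cancel (c.one_le_blocks (List.head_mem _))

lemma firstBlockEquiv_snd_blocks {n : ℕ} (c : Composition (n + 1)) :
    (firstBlockEquiv n c).2.blocks = c.blocks.tail :=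
  rfl

variable {R : Type*} [CommSemiring R] (x : ℕ → R)

lemma sum_prod_map_blocks_zero : ∑ c : Composition 0, (c.blocks.map x).prod = 1 := by
  have hc : ∀ c : Composition 0, c.blocks = [] := fun c => c.blocks_eq_nil.2 rfl
  simp [hc, composition_card]

lemma sum_prod_map_blocks_succ (n : ℕ) :
    ∑ c : Composition (n + 1), (c.blocks.map x).prod =
      ∑ j ∈ range (n + 1), x (j + 1) * ∑ c : Composition (n - j), (c.blocks.map x).prod := by
  rw [← Fin.sum_univ_eq_sum_range (fun j => x (j + 1) * ∑ c : Composition (n - j), _),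
    Fintype.sum_equiv (firstBlockEquiv n) _ (fun jc => x (jc.1 + 1) * (jc.2.blocks.map x).prod)]
  · simp only [Fintype.sum_sigma, mul_sum]
  · intro c
    rw [firstBlockEquiv_fst_add_one, firstBlockEquiv_snd_blocks, ← List.prod_cons, ← List.map_cons,
      List.cons_head_tail]

end Composition

theorem sum_prod_map_blocks_eq_invert (x : ℕ → ℚ) {n : ℕ} (hn : 1 ≤ n) :
    ∑ c : Composition n, (c.blocks.map x).prod = invert x n := by
  induction n using Nat.strong_induction_on with
  | _ n ih =>
    obtain ⟨m, rfl⟩ : ∃ m, n = m + 1 := ⟨n - 1, by omega⟩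
    rw [Composition.sum_prod_map_blocks_succ, sum_range_succ, Nat.sub_self,
      Composition.sum_prod_map_blocks_zero, mul_one, invert, add_comm]
    congr 1
    refine sum_congr rfl fun j hj => ?_
    rw [ih (m - j) (by omega) (Nat.sub_pos_of_lt (mem_range.1 hj))]

/-- For `f₀ : ℕ → ℕ` and `n ≥ 1`, the sum over all compositions `(j₁, …, j_k)` of `n`
of the products `f₀ j₁ ⋯ f₀ j_k` equals the `n`-th term of the invert transform of `f₀`. -/
theorem stmt_4 (f₀ : ℕ → ℕ) (n : ℕ) (hn : 1 ≤ n) :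
    ∑ c : Composition n, (c.blocks.map fun j => (f₀ j : ℚ)).prod
      = invert (fun j => (f₀ j : ℚ)) n :=
  sum_prod_map_blocks_eq_invert _ hn
end

section
/- Fix ℓ ≥ 1 and m ≥ 1, and let f₀ : ℕ → ℚ be the sequence with f₀(j) = 1 for 1 ≤ j ≤ ℓ and f₀(j) = 0 otherwise. Then for every n ≥ 0, the m-th invert transform of f₀ satisfies (𝒴^m f₀)(n+1) = Σ_{k=1}^{n+1} Σ_{j=0}^{⌊(n+1−k)/ℓ⌋} (−1)^j · C(k, j) · C(n − ℓj, k − 1) · m^(k−1). (This number counts the words of length n over the alphabet {0, 1, …, m} that avoid runs of ℓ consecutive zeros.) -/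
def Fseq (ℓ : ℕ) : ℕ → ℚ := fun i => if 1 ≤ i ∧ i ≤ ℓ then 1 else 0

def pconv (ℓ : ℕ) : ℕ → ℕ → ℚ
  | 0, n => if n = 0 then 1 else 0
  | k+1, n => ∑ i ∈ Finset.range n, Fseq ℓ (i+1) * pconv ℓ k (n - 1 - i)

lemma pconv_eq_zero (ℓ : ℕ) : ∀ k n, n < k → pconv ℓ k n = 0 := by
  intro k
  induction k with
  | zero => intro n h; omega
  | succ k ih =>
    intro n h
    rw [pconv]
    apply Finset.sum_eq_zero
    intro i hi
    simp only [Finset.mem_range] at hi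
    rw [ih (n - 1 - i) (by omega), mul_zero]

lemma pconv_zero_right (ℓ k : ℕ) : pconv ℓ (k+1) 0 = 0 := by
  rw [pconv]; simp

lemma pconv_one (ℓ : ℕ) (n : ℕ) : pconv ℓ 1 n = Fseq ℓ n := by
  rw [pconv]
  rcases Nat.eq_zero_or_pos n with h | h
  · subst h; simp [Fseq]
  · rw [Finset.sum_eq_single (n-1)]
    · rw [show n-1-(n-1) = 0 by omega, pconv, if_pos rfl, mul_one,
        show n-1+1 = n by omega]
    · intro i hi hne
      simp only [Finset.mem_range] at hi
      rw [pconv, if_neg (by omega), mul_zero]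
    · intro h'; simp only [Finset.mem_range] at h'; omega

lemma pconv_conv (ℓ : ℕ) : ∀ a b n, (∑ i ∈ Finset.range (n+1), pconv ℓ a i * pconv ℓ b (n - i)) = pconv ℓ (a+b) n := by
  intro a
  induction a with
  | zero =>
    intro b n
    rw [Finset.sum_eq_single 0]
    · rw [pconv]; simp
    · intro i hi hne; rw [pconv, if_neg hne, zero_mul]
    · simp
  | succ a ih =>
    intro b n
    calc (∑ i ∈ Finset.range (n+1), pconv ℓ (a+1) i * pconv ℓ b (n - i))
        = ∑ i ∈ Finset.range (n+1), ∑ u ∈ Finset.range i,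
            Fseq ℓ (u+1) * pconv ℓ a (i - 1 - u) * pconv ℓ b (n - i) := by
          refine Finset.sum_congr rfl fun i _ => ?_
          rw [pconv, Finset.sum_mul]
      _ = ∑ u ∈ Finset.range (n+1), ∑ i ∈ Finset.Ico (u+1) (n+1),
            Fseq ℓ (u+1) * pconv ℓ a (i - 1 - u) * pconv ℓ b (n - i) := by
          apply Finset.sum_comm'
          intro i u
          simp only [Finset.mem_range, Finset.mem_Ico]
          omega
      _ = ∑ u ∈ Finset.range (n+1), Fseq ℓ (u+1) *
            ∑ j ∈ Finset.range (n - u), pconv ℓ a j * pconv ℓ b (n - (u+1) - j) := by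
          apply Finset.sum_congr rfl
          intro u _
          rw [Finset.sum_Ico_eq_sum_range, Finset.mul_sum,
            show n + 1 - (u+1) = n - u from by omega]
          apply Finset.sum_congr rfl
          intro j hj
          rw [mul_assoc]
          congr 2
          · congr 1; omega
          · congr 1; omega
      _ = pconv ℓ (a+1+b) n := by
          rw [show a+1+b = (a+b)+1 by ring, pconv]
          rcases Nat.eq_zero_or_pos n with h | h
          · subst h; simp
          · rw [Finset.sum_range_succ, show n - n = 0 by omega]
            simp only [Finset.range_zero, Finset.sum_empty, mul_zero, add_zero]
            apply Finset.sum_congr rfl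
            intro u hu
            simp only [Finset.mem_range] at hu
            congr 1
            rw [← ih b (n-1-u), show n - u = (n-1-u)+1 by omega]
            apply Finset.sum_congr rfl
            intro j _
            congr 2
            omega

def gseq (ℓ m : ℕ) (n : ℕ) : ℚ := ∑ k ∈ Finset.range n, (m:ℚ)^k * pconv ℓ (k+1) n

lemma gseq_zero (ℓ m : ℕ) : gseq ℓ m 0 = 0 := by simp [gseq]

lemma gseq_zero_left (ℓ : ℕ) : gseq ℓ 0 = Fseq ℓ := by
  funext n
  rcases Nat.eq_zero_or_pos n with h | h
  · subst h; simp [gseq, Fseq]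
  · rw [gseq, show n = (n-1)+1 by omega, Finset.sum_range_succ']
    rw [← pconv_one ℓ]
    simp only [Nat.cast_zero, pow_zero, one_mul]
    have : ∀ k ∈ Finset.range (n-1), (0:ℚ)^(k+1) * pconv ℓ (k+1+1) ((n-1)+1) = 0 := by
      intro k _; rw [zero_pow (by omega), zero_mul]
    rw [Finset.sum_congr rfl this, Finset.sum_const_zero, zero_add]

-- the key identity
lemma gseq_key (ℓ m n : ℕ) :
    gseq ℓ (m+1) (n+1) = gseq ℓ m (n+1)
      + ∑ j ∈ Finset.range n, gseq ℓ m (j+1) * gseq ℓ (m+1) (n - j) := by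
  have hg : ∀ (M : ℕ) (t : ℕ), t ≤ n + 1 → gseq ℓ M t
      = ∑ k ∈ Finset.range (n+1), (M:ℚ)^k * pconv ℓ (k+1) t := by
    intro M t ht
    rw [gseq]
    apply Finset.sum_subset (Finset.range_subset_range.2 (by omega))
    intro k hk hk'
    simp only [Finset.mem_range] at hk hk'
    rw [pconv_eq_zero ℓ (k+1) t (by omega), mul_zero]
  have step1 : (∑ j ∈ Finset.range n, gseq ℓ m (j+1) * gseq ℓ (m+1) (n - j))
      = ∑ a ∈ Finset.range (n+1), ∑ b ∈ Finset.range (n+1),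
          (m:ℚ)^a * ((m:ℚ)+1)^b * pconv ℓ (a+b+2) (n+1) := by
    have expand : ∀ j ∈ Finset.range n, gseq ℓ m (j+1) * gseq ℓ (m+1) (n - j)
        = ∑ a ∈ Finset.range (n+1), ∑ b ∈ Finset.range (n+1),
            (m:ℚ)^a * ((m:ℚ)+1)^b * (pconv ℓ (a+1) (j+1) * pconv ℓ (b+1) (n-j)) := by
      intro j hj
      simp only [Finset.mem_range] at hj
      rw [hg m (j+1) (by omega), hg (m+1) (n-j) (by omega), Finset.sum_mul_sum]
      apply Finset.sum_congr rfl; intro a _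
      apply Finset.sum_congr rfl; intro b _
      push_cast
      ring
    rw [Finset.sum_congr rfl expand, Finset.sum_comm]
    apply Finset.sum_congr rfl; intro a _
    rw [Finset.sum_comm]
    apply Finset.sum_congr rfl; intro b _
    rw [← Finset.mul_sum]
    congr 1
    -- ∑ j ∈ range n, pconv (a+1) (j+1) * pconv (b+1) (n-j) = pconv (a+b+2) (n+1)
    have := pconv_conv ℓ (a+1) (b+1) (n+1)
    rw [show a+1+(b+1) = a+b+2 by ring] at this
    rw [← this, Finset.sum_range_succ', pconv_zero_right, zero_mul, add_zero,
      Finset.sum_range_succ, show n+1 - (n+1) = 0 by omega, pconv_zero_right, mul_zero, add_zero]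
    apply Finset.sum_congr rfl
    intro j _
    congr 2
    omega
  rw [step1, hg m (n+1) le_rfl, hg (m+1) (n+1) le_rfl]
  have step2 : ∀ a ∈ Finset.range (n+1),
      (∑ b ∈ Finset.range (n+1), (m:ℚ)^a * ((m:ℚ)+1)^b * pconv ℓ (a+b+2) (n+1))
      = ∑ k ∈ Finset.Ico (a+1) (n+1), (m:ℚ)^a * ((m:ℚ)+1)^(k-a-1) * pconv ℓ (k+1) (n+1) := by
    intro a ha
    rw [Finset.sum_Ico_eq_sum_range, show n+1-(a+1) = n-a by omega]
    rw [show (∑ b ∈ Finset.range (n+1), (m:ℚ)^a * ((m:ℚ)+1)^b * pconv ℓ (a+b+2) (n+1))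
        = ∑ b ∈ Finset.range (n-a), (m:ℚ)^a * ((m:ℚ)+1)^b * pconv ℓ (a+b+2) (n+1) from
      (Finset.sum_subset (Finset.range_subset_range.2 (by omega)) (fun b hb hb' => by
        simp only [Finset.mem_range] at hb hb'
        rw [pconv_eq_zero ℓ (a+b+2) (n+1) (by omega), mul_zero])).symm]
    apply Finset.sum_congr rfl
    intro b hb
    rw [show a+1+b-a-1 = b by omega, show a+1+b+1 = a+b+2 by omega]
  rw [Finset.sum_congr rfl step2]
  rw [Finset.sum_comm' (t' := Finset.range (n+1)) (s' := fun k => Finset.range k)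
      (by intro a k; simp only [Finset.mem_range, Finset.mem_Ico]; omega)]
  rw [← Finset.sum_add_distrib]
  apply Finset.sum_congr rfl
  intro k _
  rw [← Finset.sum_mul]
  have geo : (∑ a ∈ Finset.range k, (m:ℚ)^a * ((m:ℚ)+1)^(k-a-1)) = ((m:ℚ)+1)^k - (m:ℚ)^k := by
    have := geom_sum₂_mul (m:ℚ) ((m:ℚ)+1) k
    simp only [show (m:ℚ) - ((m:ℚ)+1) = -1 by ring] at this
    have h2 : (∑ i ∈ Finset.range k, (m:ℚ)^i * ((m:ℚ)+1)^(k-1-i)) = ((m:ℚ)+1)^k - (m:ℚ)^k := by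
      linarith [this]
    rw [← h2]
    apply Finset.sum_congr rfl
    intro a _
    congr 2
    omega
  rw [geo]
  push_cast
  ring

lemma invert_gseq (ℓ m : ℕ) : invert (gseq ℓ m) = gseq ℓ (m+1) := by
  funext n
  induction n using Nat.strong_induction_on with
  | _ n ih =>
    match n with
    | 0 => rw [invert, gseq_zero]
    | n+1 =>
      rw [invert, gseq_key ℓ m n]
      congr 1
      apply Finset.sum_congr rfl
      intro j hj
      simp only [Finset.mem_range] at hj
      rw [ih (n - j) (by omega)]

lemma iterate_invert (ℓ m : ℕ) : invert^[m] (Fseq ℓ) = gseq ℓ m := by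
  induction m with
  | zero => simp [gseq_zero_left]
  | succ m ih => rw [Function.iterate_succ_apply', ih, invert_gseq]

def qs (ℓ k N : ℕ) : ℚ :=
  ∑ j ∈ Finset.range (N+1),
    if 1 + ℓ*j ≤ N then
      (-1:ℚ)^j * (((k+1).choose j : ℕ) : ℚ) * (((N - ℓ*j - 1).choose k : ℕ) : ℚ)
    else 0

def Hh (k t : ℕ) : ℚ := if 1 ≤ t then (((t-1).choose k : ℕ) : ℚ) else 0

lemma hockey (k : ℕ) : ∀ (s t : ℕ),
    (∑ i ∈ Finset.range s, Hh k (t - i))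
      = ((t.choose (k+1) : ℕ) : ℚ) - (((t - s).choose (k+1) : ℕ) : ℚ) := by
  intro s
  induction s with
  | zero => intro t; simp
  | succ s ih =>
    intro t
    rw [Finset.sum_range_succ, ih t]
    have step : Hh k (t - s) = (((t-s).choose (k+1) : ℕ) : ℚ) - (((t-s-1).choose (k+1) : ℕ) : ℚ) := by
      rcases Nat.eq_zero_or_pos (t - s) with h | h
      · rw [h, Hh, if_neg (by omega), show (0:ℕ) - 1 = 0 by omega]
        simp
      · obtain ⟨v, hv⟩ : ∃ v, t - s = v + 1 := ⟨t-s-1, by omega⟩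
        rw [Hh, if_pos (show 1 ≤ t - s from h), hv, Nat.add_sub_cancel,
          Nat.choose_succ_succ' v k]
        push_cast
        ring
    rw [step, show t - (s+1) = t - s - 1 by omega]
    ring

lemma q_base (ℓ : ℕ) (N : ℕ) : qs ℓ 0 N = Fseq ℓ N := by
  rcases Nat.eq_zero_or_pos N with h | h
  · subst h; simp [qs, Fseq]
  · rw [qs]
    have hsub : ({0, 1} : Finset ℕ) ⊆ Finset.range (N+1) := by
      intro x hx; simp only [Finset.mem_insert, Finset.mem_singleton] at hx
      rcases hx with rfl | rfl <;> simp [Finset.mem_range] <;> omega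
    rw [← Finset.sum_subset hsub]
    · rw [Finset.sum_pair (by omega : (0:ℕ) ≠ 1)]
      simp only [pow_zero, pow_one, Nat.choose_self, Nat.choose_zero_right, Nat.choose_one_right,
        Nat.cast_one, mul_one, one_mul, Nat.choose_zero_right, mul_zero]
      rw [Fseq]
      split_ifs <;> first | (exfalso; omega) | norm_num
    · intro j hj hj'
      simp only [Finset.mem_insert, Finset.mem_singleton] at hj'
      have h2 : 2 ≤ j := by omega
      split_ifs with hc
      · have h3 : (0+1).choose j = 0 := Nat.choose_eq_zero_of_lt (by omega)
        rw [h3]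
        simp
      · rfl

lemma q_succ (ℓ : ℕ) (hℓ : 1 ≤ ℓ) (k N : ℕ) :
    qs ℓ (k+1) N = ∑ i ∈ Finset.range ℓ, qs ℓ k (N - 1 - i) := by
  set J : ℕ → ℚ := fun j => (((N - 1 - ℓ*j).choose (k+1) : ℕ) : ℚ) with hJ
  have hRHS : (∑ i ∈ Finset.range ℓ, qs ℓ k (N - 1 - i))
      = ∑ j ∈ Finset.range (N+1),
          (-1:ℚ)^j * (((k+1).choose j : ℕ) : ℚ) * (J j - J (j+1)) := by
    have h1 : ∀ i ∈ Finset.range ℓ, qs ℓ k (N-1-i)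
        = ∑ j ∈ Finset.range (N+1),
            (-1:ℚ)^j * (((k+1).choose j : ℕ) : ℚ) * Hh k (N - 1 - ℓ*j - i) := by
      intro i hi
      rw [qs]
      rw [Finset.sum_subset (Finset.range_subset_range.2 (show (N-1-i)+1 ≤ N+1 by omega))]
      · apply Finset.sum_congr rfl
        intro j _
        by_cases hc : 1 + ℓ*j ≤ N-1-i
        · rw [if_pos hc, Hh, if_pos (show 1 ≤ N-1-ℓ*j-i by omega),
            show N - 1 - i - ℓ*j - 1 = N - 1 - ℓ*j - i - 1 by omega]
        · rw [if_neg hc, Hh, if_neg (by omega), mul_zero]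
      · intro j hj hj'
        simp only [Finset.mem_range] at hj hj'
        have hjl : j ≤ ℓ * j := Nat.le_mul_of_pos_left j hℓ
        rw [if_neg (by omega)]
    rw [Finset.sum_congr rfl h1, Finset.sum_comm]
    apply Finset.sum_congr rfl
    intro j _
    rw [← Finset.mul_sum]
    congr 1
    have hko : ∀ i : ℕ, N - 1 - ℓ*j - i = (N - 1 - ℓ*j) - i := fun i => rfl
    rw [hockey k ℓ (N - 1 - ℓ*j), hJ]
    simp only []
    rw [show N - 1 - ℓ*j - ℓ = N - 1 - ℓ*(j+1) from by rw [Nat.mul_succ]; omega]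
  have hLHS : qs ℓ (k+1) N = ∑ j ∈ Finset.range (N+1),
      (-1:ℚ)^j * (((k+2).choose j : ℕ) : ℚ) * J j := by
    rw [qs]
    apply Finset.sum_congr rfl
    intro j _
    by_cases hc : 1 + ℓ*j ≤ N
    · rw [if_pos hc, show N - ℓ*j - 1 = N - 1 - ℓ*j by omega]
    · rw [if_neg hc, hJ]
      simp only []
      rw [show N - 1 - ℓ*j = 0 by omega, Nat.choose_eq_zero_of_lt (Nat.succ_pos k)]
      simp
  rw [hLHS, hRHS]
  have hsplit : ∀ j ∈ Finset.range (N+1),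
      (-1:ℚ)^j * (((k+1).choose j : ℕ) : ℚ) * (J j - J (j+1))
      = (-1:ℚ)^j * (((k+1).choose j : ℕ) : ℚ) * J j
        - (-1:ℚ)^j * (((k+1).choose j : ℕ) : ℚ) * J (j+1) := by
    intro j _; ring
  rw [Finset.sum_congr rfl hsplit, Finset.sum_sub_distrib]
  have hC : (∑ j ∈ Finset.range (N+1), (-1:ℚ)^j * (((k+1).choose j : ℕ) : ℚ) * J (j+1))
      = ∑ j ∈ Finset.range N, (-1:ℚ)^j * (((k+1).choose j : ℕ) : ℚ) * J (j+1) := by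
    rw [Finset.sum_range_succ]
    have : J (N+1) = 0 := by
      rw [hJ]
      simp only []
      have : N + 1 ≤ ℓ * (N+1) := Nat.le_mul_of_pos_left (N+1) hℓ
      rw [show N - 1 - ℓ*(N+1) = 0 by omega, Nat.choose_eq_zero_of_lt (by omega), Nat.cast_zero]
    rw [this, mul_zero, add_zero]
  rw [hC]
  rw [Finset.sum_range_succ' (fun j => (-1:ℚ)^j * (((k+2).choose j : ℕ) : ℚ) * J j) N,
    Finset.sum_range_succ' (fun j => (-1:ℚ)^j * (((k+1).choose j : ℕ) : ℚ) * J j) N]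
  simp only [pow_zero, Nat.choose_zero_right, Nat.cast_one, one_mul]
  have hterm : ∀ j ∈ Finset.range N,
      (-1:ℚ)^(j+1) * (((k+2).choose (j+1) : ℕ) : ℚ) * J (j+1)
      = (-1:ℚ)^(j+1) * (((k+1).choose (j+1) : ℕ) : ℚ) * J (j+1)
        - (-1:ℚ)^j * (((k+1).choose j : ℕ) : ℚ) * J (j+1) := by
    intro j _
    rw [show (k+2).choose (j+1) = (k+1).choose j + (k+1).choose (j+1) from
      Nat.choose_succ_succ' (k+1) j]
    push_cast
    ring
  rw [Finset.sum_congr rfl hterm, Finset.sum_sub_distrib]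
  ring

lemma pconv_struct (ℓ : ℕ) (k N : ℕ) :
    pconv ℓ (k+2) N = ∑ i ∈ Finset.range ℓ, pconv ℓ (k+1) (N - 1 - i) := by
  rw [pconv]
  have h1 : ∀ i ∈ Finset.range N, Fseq ℓ (i+1) * pconv ℓ (k+1) (N-1-i)
      = if i ∈ Finset.range ℓ then pconv ℓ (k+1) (N-1-i) else 0 := by
    intro i _
    rw [Fseq]
    simp only [Finset.mem_range]
    by_cases hi : i < ℓ
    · rw [if_pos (by omega), if_pos hi, one_mul]
    · rw [if_neg (by omega), if_neg hi, zero_mul]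
  rw [Finset.sum_congr rfl h1, Finset.sum_ite_mem]
  have h2 : Finset.range N ∩ Finset.range ℓ = Finset.range (min N ℓ) := by
    ext x; simp only [Finset.mem_inter, Finset.mem_range]; omega
  rw [h2]
  apply Finset.sum_subset (Finset.range_subset_range.2 (by omega))
  intro i hi hi'
  simp only [Finset.mem_range] at hi hi'
  rw [show N - 1 - i = 0 by omega]
  exact pconv_zero_right ℓ k

lemma p_eq_q (ℓ : ℕ) (hℓ : 1 ≤ ℓ) : ∀ k N, pconv ℓ (k+1) N = qs ℓ k N := by
  intro k
  induction k with
  | zero => intro N; rw [pconv_one, q_base]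
  | succ k ih =>
    intro N
    rw [pconv_struct, q_succ ℓ hℓ k N]
    exact Finset.sum_congr rfl fun i _ => ih (N-1-i)

lemma invert_congr_s7 (x y : ℕ → ℚ) (h : ∀ i, 1 ≤ i → x i = y i) : invert x = invert y := by
  funext n
  induction n using Nat.strong_induction_on with
  | _ n ih =>
    match n with
    | 0 => rw [invert, invert]
    | n+1 =>
      rw [invert, invert, h (n+1) (by omega)]
      congr 1
      apply Finset.sum_congr rfl
      intro j hj
      simp only [Finset.mem_range] at hj
      rw [h (j+1) (by omega), ih (n-j) (by omega)]

/-- For `f₀ j = 1` if `1 ≤ j ≤ ℓ` and `0` otherwise, and `m ≥ 1`: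
`(𝒴^m f₀)(n+1) = ∑_{k=1}^{n+1} ∑_{j=0}^{⌊(n+1-k)/ℓ⌋} (-1)^j C(k,j) C(n-ℓj, k-1) m^(k-1)`,
which counts words of length `n` over `{0,…,m}` avoiding runs of `ℓ` zeros. -/
theorem stmt_7 (ℓ m : ℕ) (hℓ : 1 ≤ ℓ) (hm : 1 ≤ m) (f₀ : ℕ → ℚ)
    (hf : ∀ j, 1 ≤ j → f₀ j = if j ≤ ℓ then 1 else 0) (n : ℕ) :
    (invert^[m] f₀) (n + 1)
      = ∑ k ∈ Finset.Icc 1 (n + 1), ∑ j ∈ Finset.range ((n + 1 - k) / ℓ + 1),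
          (-1 : ℚ) ^ j * (k.choose j : ℚ) * ((n - ℓ * j).choose (k - 1) : ℚ) *
            (m : ℚ) ^ (k - 1) := by
  -- replace f₀ by Fseq ℓ
  have hcong : invert f₀ = invert (Fseq ℓ) := by
    apply invert_congr_s7
    intro i hi
    rw [hf i hi, Fseq]
    by_cases h : i ≤ ℓ
    · rw [if_pos h, if_pos ⟨hi, h⟩]
    · rw [if_neg h, if_neg (by tauto)]
  obtain ⟨m', rfl⟩ : ∃ m', m = m' + 1 := ⟨m - 1, by omega⟩
  have hiter : invert^[m'+1] f₀ = gseq ℓ (m'+1) := by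
    rw [Function.iterate_succ_apply, hcong, ← Function.iterate_succ_apply, iterate_invert]
  rw [hiter]
  -- RHS reindex: Icc 1 (n+1) = Ico 1 (n+2)
  rw [← Finset.Ico_add_one_right_eq_Icc, Finset.sum_Ico_eq_sum_range]
  rw [gseq]
  rw [show n + 1 + 1 - 1 = n + 1 by omega]
  apply Finset.sum_congr rfl
  intro k' hk'
  simp only [Finset.mem_range] at hk'
  rw [p_eq_q ℓ hℓ k' (n+1), qs, Finset.mul_sum]
  rw [show 1 + k' - 1 = k' by omega, show n + 1 - (1 + k') = n - k' by omega]
  rw [← Finset.sum_subset (Finset.range_subset_range.2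
      (show (n - k')/ℓ + 1 ≤ n + 1 + 1 by
        have := Nat.div_le_self (n - k') ℓ; omega))]
  · apply Finset.sum_congr rfl
    intro j hj
    simp only [Finset.mem_range] at hj
    have hj' : j ≤ (n - k')/ℓ := by omega
    have hle : ℓ * j ≤ n - k' := by
      calc ℓ * j ≤ ℓ * ((n-k')/ℓ) := Nat.mul_le_mul_left ℓ hj'
        _ ≤ n - k' := Nat.mul_div_le (n-k') ℓ
    rw [if_pos (by omega), show n + 1 - ℓ*j - 1 = n - ℓ*j by omega,
      show (1 + k').choose j = (k'+1).choose j by rw [Nat.add_comm]]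
    ring
  · intro j hj hj'
    simp only [Finset.mem_range] at hj hj'
    have hgt : n - k' < ℓ * j := by
      have h1 : (n - k')/ℓ < j := by omega
      exact (Nat.div_lt_iff_lt_mul (by omega)).1 h1 |>.trans_le (by rw [Nat.mul_comm])
    by_cases hc : 1 + ℓ*j ≤ n + 1
    · rw [if_pos hc, Nat.choose_eq_zero_of_lt (show n + 1 - ℓ*j - 1 < k' by omega)]
      simp
    · rw [if_neg hc, mul_zero]
end

section
/- Fix m ≥ 1 and let f₀ : ℕ → ℚ be the sequence with f₀(j) = 1 if j is odd and f₀(j) = 0 if j is even (for j ≥ 1). Then for every n ≥ 0, the m-th invert transform of f₀ satisfies (𝒴^m f₀)(n+1) = Σ_{k=0}^{⌊n/2⌋} C(n − k, k) · m^(n − 2k). (This number counts the words of length n over the alphabet {0, 1, …, m} that avoid runs of zeros of odd length.) -/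
def fibP (m n : ℕ) : ℚ :=
  ∑ k ∈ Finset.range (n / 2 + 1), ((n - k).choose k : ℚ) * (m : ℚ) ^ (n - 2 * k)

lemma fibP_zero (m : ℕ) : fibP m 0 = 1 := by simp [fibP]

lemma fibP_one (m : ℕ) : fibP m 1 = m := by simp [fibP]

lemma fibP_rec (m n : ℕ) : fibP m (n + 2) = m * fibP m (n + 1) + fibP m n := by
  have key : (m : ℚ) * fibP m (n + 1)
      = (∑ k ∈ Finset.range (n / 2 + 1),
          ((n - k).choose (k + 1) : ℚ) * (m : ℚ) ^ (n - 2 * k)) + (m : ℚ) ^ (n + 2) := by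
    unfold fibP
    rw [Finset.mul_sum, Finset.sum_range_succ']
    have h1 : ∑ k ∈ Finset.range ((n + 1) / 2),
        (m : ℚ) * (((n + 1 - (k + 1)).choose (k + 1) : ℚ) * (m : ℚ) ^ (n + 1 - 2 * (k + 1)))
        = ∑ k ∈ Finset.range ((n + 1) / 2),
          ((n - k).choose (k + 1) : ℚ) * (m : ℚ) ^ (n - 2 * k) := by
      refine Finset.sum_congr rfl fun k hk => ?_
      rw [Finset.mem_range] at hk
      have e1 : n + 1 - (k + 1) = n - k := by omega
      have e2 : n - 2 * k = (n + 1 - 2 * (k + 1)) + 1 := by omega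
      rw [e1, e2, pow_succ]
      ring
    have h2 : ∑ k ∈ Finset.range ((n + 1) / 2),
          ((n - k).choose (k + 1) : ℚ) * (m : ℚ) ^ (n - 2 * k)
        = ∑ k ∈ Finset.range (n / 2 + 1),
          ((n - k).choose (k + 1) : ℚ) * (m : ℚ) ^ (n - 2 * k) := by
      rcases Nat.even_or_odd n with he | ho
      · obtain ⟨l, hl⟩ := he
        have hr : n / 2 + 1 = (n + 1) / 2 + 1 := by omega
        rw [hr, Finset.sum_range_succ]
        have hz : (n - (n + 1) / 2).choose ((n + 1) / 2 + 1) = 0 :=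
          Nat.choose_eq_zero_of_lt (by omega)
        rw [hz]
        simp
      · obtain ⟨l, hl⟩ := ho
        have hr : (n + 1) / 2 = n / 2 + 1 := by omega
        rw [hr]
    rw [h1, h2]
    have e3 : (m : ℚ) * (((n + 1 - 0).choose 0 : ℚ) * (m : ℚ) ^ (n + 1 - 2 * 0))
        = (m : ℚ) ^ (n + 2) := by
      simp [pow_succ]
      ring
    rw [e3]
  rw [key]
  unfold fibP
  have hr2 : (n + 2) / 2 + 1 = (n / 2 + 1) + 1 := by omega
  rw [hr2, Finset.sum_range_succ']
  have h3 : ∑ k ∈ Finset.range (n / 2 + 1),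
      ((n + 2 - (k + 1)).choose (k + 1) : ℚ) * (m : ℚ) ^ (n + 2 - 2 * (k + 1))
      = (∑ k ∈ Finset.range (n / 2 + 1), ((n - k).choose k : ℚ) * (m : ℚ) ^ (n - 2 * k))
        + ∑ k ∈ Finset.range (n / 2 + 1), ((n - k).choose (k + 1) : ℚ) * (m : ℚ) ^ (n - 2 * k) := by
    rw [← Finset.sum_add_distrib]
    refine Finset.sum_congr rfl fun k hk => ?_
    rw [Finset.mem_range] at hk
    have e1 : n + 2 - (k + 1) = (n - k) + 1 := by omega
    have e2 : n + 2 - 2 * (k + 1) = n - 2 * k := by omega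
    rw [e1, e2, Nat.choose_succ_succ']
    push_cast
    ring
  rw [h3]
  have e4 : ((n + 2 - 0).choose 0 : ℚ) * (m : ℚ) ^ (n + 2 - 2 * 0) = (m : ℚ) ^ (n + 2) := by simp
  rw [e4]
  ring

lemma conv (m : ℕ) : ∀ n, fibP (m + 1) n
    = fibP m n + ∑ j ∈ Finset.range n, fibP m j * fibP (m + 1) (n - 1 - j) := by
  intro n
  induction n using Nat.strong_induction_on with
  | _ n ih =>
    match n with
    | 0 => simp [fibP_zero]
    | 1 =>
      simp only [Finset.sum_range_one, Nat.sub_self, Nat.zero_sub, fibP_one, fibP_zero,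
        mul_one]
      push_cast
      ring
    | (n + 2) =>
      have hs : ∑ j ∈ Finset.range (n + 2), fibP m j * fibP (m + 1) (n + 2 - 1 - j)
          = (∑ j ∈ Finset.range n, fibP m j * fibP (m + 1) (n + 1 - j))
            + fibP m n * fibP (m + 1) 1 + fibP m (n + 1) * fibP (m + 1) 0 := by
        rw [Finset.sum_range_succ, Finset.sum_range_succ]
        simp only [show ∀ j : ℕ, n + 2 - 1 - j = n + 1 - j from fun j => by omega]
        rw [show n + 1 - n = 1 from by omega, show n + 1 - (n + 1) = 0 from by omega]
      have hsplit : ∑ j ∈ Finset.range n, fibP m j * fibP (m + 1) (n + 1 - j)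
          = (m + 1 : ℚ) * (∑ j ∈ Finset.range n, fibP m j * fibP (m + 1) (n - j))
            + ∑ j ∈ Finset.range n, fibP m j * fibP (m + 1) (n - 1 - j) := by
        rw [Finset.mul_sum, ← Finset.sum_add_distrib]
        refine Finset.sum_congr rfl fun j hj => ?_
        rw [Finset.mem_range] at hj
        have e1 : n + 1 - j = (n - 1 - j) + 2 := by omega
        have e2 : n - j = (n - 1 - j) + 1 := by omega
        rw [e1, e2, fibP_rec]
        push_cast
        ring
      have hS1 : ∑ j ∈ Finset.range n, fibP m j * fibP (m + 1) (n - j)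
          = (∑ j ∈ Finset.range (n + 1), fibP m j * fibP (m + 1) (n + 1 - 1 - j))
            - fibP m n * fibP (m + 1) 0 := by
        rw [Finset.sum_range_succ]
        simp only [show ∀ j : ℕ, n + 1 - 1 - j = n - j from fun j => by omega]
        rw [show n - n = 0 from by omega]
        ring
      have ih0 := ih n (by omega)
      have ih1 := ih (n + 1) (by omega)
      have ih0' : ∑ j ∈ Finset.range n, fibP m j * fibP (m + 1) (n - 1 - j)
          = fibP (m + 1) n - fibP m n := by linarith
      have ih1' : ∑ j ∈ Finset.range (n + 1), fibP m j * fibP (m + 1) (n + 1 - 1 - j)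
          = fibP (m + 1) (n + 1) - fibP m (n + 1) := by linarith
      rw [hs, hsplit, hS1, ih0', ih1']
      simp only [fibP_rec m n, fibP_rec (m + 1) n, fibP_one, fibP_zero]
      push_cast
      ring

lemma invert_eq (m : ℕ) (x : ℕ → ℚ) (hx : ∀ j, x (j + 1) = fibP m j) :
    ∀ n, invert x (n + 1) = fibP (m + 1) n := by
  intro n
  induction n using Nat.strong_induction_on with
  | _ n ih =>
    have hsum : ∀ j ∈ Finset.range n,
        x (j + 1) * invert x (n - j) = fibP m j * fibP (m + 1) (n - 1 - j) := by
      intro j hj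
      rw [Finset.mem_range] at hj
      have h1 : n - j = (n - 1 - j) + 1 := by omega
      rw [hx, h1, ih (n - 1 - j) (by omega)]
    rw [invert, hx, Finset.sum_congr rfl hsum, ← conv]

lemma fibP_zero_left (n : ℕ) : fibP 0 n = if Odd n then 0 else 1 := by
  induction n using Nat.strong_induction_on with
  | _ n ih =>
    match n with
    | 0 => simp [fibP_zero]
    | 1 => simp [fibP_one]
    | (n + 2) =>
      have h2 : Odd (n + 2) ↔ Odd n := by simp [Nat.odd_add]
      rw [fibP_rec, ih n (by omega)]
      simp [h2]

/-- For `f₀ j = 1` if `j` odd, `0` if `j` even, and `m ≥ 1`: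
`(𝒴^m f₀)(n+1) = ∑_{k=0}^{⌊n/2⌋} C(n-k, k) m^(n-2k)`,
which counts words of length `n` over `{0,…,m}` avoiding runs of zeros of odd length. -/
theorem stmt_8 (m : ℕ) (hm : 1 ≤ m) (f₀ : ℕ → ℚ)
    (hf : ∀ j, 1 ≤ j → f₀ j = if Odd j then 1 else 0) (n : ℕ) :
    (invert^[m] f₀) (n + 1)
      = ∑ k ∈ Finset.range (n / 2 + 1),
          ((n - k).choose k : ℚ) * (m : ℚ) ^ (n - 2 * k) := by
  have key : ∀ M : ℕ, ∀ n : ℕ, (invert^[M] f₀) (n + 1) = fibP M n := by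
    intro M
    induction M with
    | zero =>
      intro n
      simp only [Function.iterate_zero, id_eq]
      rw [hf (n + 1) (by omega), fibP_zero_left]
      by_cases h : Odd n <;> simp [h, Nat.odd_add_one]
    | succ M ihM =>
      intro n
      rw [Function.iterate_succ_apply']
      exact invert_eq M _ ihM n
  rw [key m n]
  rfl
end

section
/- Fix ℓ ≥ 1 and m ≥ 1, and let f₀ : ℕ → ℚ be the sequence with f₀(ℓ+1) = 0 and f₀(j) = 1 for all j ≥ 1 with j ≠ ℓ + 1. Then for every n ≥ 0, the m-th invert transform of f₀ satisfies (𝒴^m f₀)(n+1) = Σ_{k=1}^{n+1} ( Σ_{κ=0}^{k−1, (ℓ+1)κ ≤ n} (−1)^κ · C(k, κ) · C(n − (ℓ+1)κ, k − κ − 1) + (−1)^k · δ_{n+1, (ℓ+1)k} ) · m^(k−1), where δ is the Kronecker delta. (This number counts the words of length n over the alphabet {0, 1, …, m} avoiding maximal runs of exactly ℓ zeros.) -/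
/-!
Write `F = ∑_{n ≥ 1} x n tⁿ` and `Yₘ` for the generating series of `𝒴^m x`. The recursion defining
`𝒴` says `(1 - F) Y₁ = F`, and iterating gives `(1 - m F) Yₘ = F`, so that
`[t^(n+1)] Yₘ = ∑_{k ≤ n} m^k [t^(n+1)] F^(k+1)`. For `f₀` one has `F = t/(1-t) - t^(ℓ+1)`, and
expanding `F^k` by the binomial theorem, with `(t/(1-t))^j = ∑_p C(p-1, j-1) t^p`, produces the
stated coefficients.
-/

open PowerSeries

section

variable {R : Type*}

noncomputable def genSeries [Semiring R] (x : ℕ → R) : R⟦X⟧ :=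
  X * mk fun n => x (n + 1)

lemma coeff_genSeries [Semiring R] (x : ℕ → R) (n : ℕ) :
    coeff n (genSeries x) = if n = 0 then 0 else x n := by
  cases n with
  | zero => simp [genSeries]
  | succ n => simp [genSeries, coeff_succ_X_mul]

lemma X_dvd_genSeries [Semiring R] (x : ℕ → R) : X ∣ genSeries x :=
  dvd_mul_right _ _

lemma genSeries_eq_X_mul_mk_one_sub_X_pow [Ring R] (ℓ : ℕ) (x : ℕ → R)
    (hx : ∀ j, 1 ≤ j → x j = if j = ℓ + 1 then 0 else 1) :
    genSeries x = X * mk 1 - X ^ (ℓ + 1) := by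
  ext (_ | n)
  · simp [genSeries]
  · rw [map_sub, genSeries, coeff_succ_X_mul, coeff_succ_X_mul, coeff_mk, coeff_mk,
      coeff_X_pow, hx (n + 1) n.succ_pos]
    split_ifs <;> simp_all

lemma genSeries_invert (x : ℕ → ℚ) :
    genSeries (invert x) = genSeries x + genSeries x * genSeries (invert x) := by
  ext (_ | n)
  · simp [genSeries]
  · have hsq : genSeries x * genSeries (invert x)
        = X * (X * ((mk fun n => x (n + 1)) * mk fun n => invert x (n + 1))) := by
      simp only [genSeries]; ring
    rw [map_add, hsq, coeff_succ_X_mul, coeff_genSeries, coeff_genSeries, if_neg n.succ_ne_zero,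
      if_neg n.succ_ne_zero, invert]
    congr 1
    cases n with
    | zero => simp
    | succ n =>
      rw [coeff_succ_X_mul, coeff_mul, Finset.Nat.sum_antidiagonal_eq_sum_range_succ_mk]
      refine Finset.sum_congr rfl fun j hj => ?_
      rw [Finset.mem_range] at hj
      simp only [coeff_mk, show n + 1 - j = n - j + 1 by omega]

lemma one_sub_mul_genSeries_iterate_invert (x : ℕ → ℚ) (m : ℕ) :
    (1 - m * genSeries x) * genSeries (invert^[m] x) = genSeries x := by
  induction m with
  | zero => simp
  | succ m ih =>
    have h := genSeries_invert (invert^[m] x)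
    rw [← Function.iterate_succ_apply' invert] at h
    push_cast
    linear_combination (1 - m * genSeries x) * h + (1 + genSeries (invert^[m + 1] x)) * ih

lemma coeff_eq_sum_coeff_mul_pow_of_one_sub_mul_eq [CommRing R] {u V F : R⟦X⟧}
    (hu : X ∣ u) (hF : X ∣ F) (h : (1 - u) * V = F) (n : ℕ) :
    coeff n V = ∑ k ∈ Finset.range n, coeff n (F * u ^ k) := by
  have hV : X ∣ V := by
    rw [show V = F + u * V by linear_combination h]
    exact dvd_add hF (dvd_mul_of_dvd_left hu V)
  have htail : X ^ (n + 1) ∣ u ^ n * V := by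
    rw [pow_succ]
    exact mul_dvd_mul (pow_dvd_pow_of_dvd hu n) hV
  have hgeom : V = F * ∑ k ∈ Finset.range n, u ^ k + u ^ n * V := by
    linear_combination (∑ k ∈ Finset.range n, u ^ k) * h - mul_neg_geom_sum u n * V
  rw [hgeom, map_add, (X_pow_dvd_iff.mp htail) n n.lt_succ_self, add_zero, Finset.mul_sum, map_sum]

lemma coeff_succ_X_pow_mul_X_mul_mk_one_pow [CommRing R] (a j p : ℕ) (hj : 0 < j) :
    coeff (p + 1) (X ^ a * (X * mk 1 : R⟦X⟧) ^ j)
      = if a ≤ p then ((p - a).choose (j - 1) : R) else 0 := by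
  obtain ⟨i, rfl⟩ := Nat.exists_eq_add_of_lt hj
  rw [mul_pow, ← mul_assoc, ← pow_add, show 0 + i + 1 = i + 1 by omega,
    mk_one_pow_eq_mk_choose_add, coeff_X_pow_mul', coeff_mk]
  split_ifs with h₁ h₂ h₂
  · congr 2; omega
  · omega
  · rw [Nat.choose_eq_zero_of_lt (by omega), Nat.cast_zero]
  · rfl

lemma coeff_succ_X_mul_mk_one_sub_X_pow_pow [CommRing R] (ℓ n k : ℕ) :
    coeff (n + 1) ((X * mk 1 - X ^ (ℓ + 1) : R⟦X⟧) ^ k)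
      = (∑ κ ∈ (Finset.range k).filter (fun κ => (ℓ + 1) * κ ≤ n),
          (-1 : R) ^ κ * (k.choose κ : R) * ((n - (ℓ + 1) * κ).choose (k - κ - 1) : R))
        + (if n + 1 = (ℓ + 1) * k then (-1 : R) ^ k else 0) := by
  rw [sub_eq_neg_add, add_pow, map_sum, Finset.sum_range_succ, Finset.sum_filter]
  congr 1
  · refine Finset.sum_congr rfl fun κ hκ => ?_
    rw [Finset.mem_range] at hκ
    have hterm : (-X ^ (ℓ + 1)) ^ κ * (X * mk 1) ^ (k - κ) * (k.choose κ : R⟦X⟧)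
        = C ((-1 : R) ^ κ * k.choose κ) * (X ^ ((ℓ + 1) * κ) * (X * mk 1) ^ (k - κ)) := by
      simp only [map_mul, map_pow, map_neg, map_one, map_natCast]
      ring
    rw [hterm, coeff_C_mul, coeff_succ_X_pow_mul_X_mul_mk_one_pow _ _ _ (by omega)]
    split_ifs <;> simp [Nat.sub_sub]
  · have hterm : (-X ^ (ℓ + 1)) ^ k * (X * mk 1) ^ (k - k) * (k.choose k : R⟦X⟧)
        = C ((-1 : R) ^ k) * X ^ ((ℓ + 1) * k) := by
      simp only [Nat.sub_self, Nat.choose_self, map_pow, map_neg, map_one]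
      ring
    rw [hterm, coeff_C_mul, coeff_X_pow]
    split_ifs <;> simp_all [eq_comm]

end

theorem stmt_11_general (ℓ m : ℕ) (f₀ : ℕ → ℚ)
    (hf : ∀ j, 1 ≤ j → f₀ j = if j = ℓ + 1 then 0 else 1) (n : ℕ) :
    (invert^[m] f₀) (n + 1)
      = ∑ k ∈ Finset.Icc 1 (n + 1),
          ((∑ κ ∈ (Finset.range k).filter (fun κ => (ℓ + 1) * κ ≤ n),
              (-1 : ℚ) ^ κ * (k.choose κ : ℚ) * ((n - (ℓ + 1) * κ).choose (k - κ - 1) : ℚ))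
            + (if n + 1 = (ℓ + 1) * k then (-1 : ℚ) ^ k else 0)) * (m : ℚ) ^ (k - 1) := by
  have hcoeff := coeff_eq_sum_coeff_mul_pow_of_one_sub_mul_eq
    (dvd_mul_of_dvd_right (X_dvd_genSeries f₀) _) (X_dvd_genSeries f₀)
    (one_sub_mul_genSeries_iterate_invert f₀ m) (n + 1)
  rw [coeff_genSeries, if_neg n.succ_ne_zero] at hcoeff
  rw [hcoeff, ← Finset.Ico_add_one_right_eq_Icc, Finset.sum_Ico_eq_sum_range, Nat.add_sub_cancel]
  refine Finset.sum_congr rfl fun k _ => ?_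
  rw [show genSeries f₀ * (m * genSeries f₀) ^ k = C ((m : ℚ) ^ k) * genSeries f₀ ^ (k + 1) by
      simp only [map_pow, map_natCast]; ring,
    coeff_C_mul, genSeries_eq_X_mul_mk_one_sub_X_pow ℓ f₀ hf,
    coeff_succ_X_mul_mk_one_sub_X_pow_pow, add_comm 1 k, Nat.add_sub_cancel, mul_comm]

/-- For `f₀ (ℓ+1) = 0` and `f₀ j = 1` for all other `j ≥ 1`, and `m ≥ 1`:
`(𝒴^m f₀)(n+1) = ∑_{k=1}^{n+1} (∑_{κ<k, (ℓ+1)κ≤n} (-1)^κ C(k,κ) C(n-(ℓ+1)κ, k-κ-1)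
+ (-1)^k δ_{n+1,(ℓ+1)k}) m^(k-1)`, which counts words of length `n` over `{0,…,m}`
avoiding maximal runs of exactly `ℓ` zeros. -/
theorem stmt_11 (ℓ m : ℕ) (hℓ : 1 ≤ ℓ) (hm : 1 ≤ m) (f₀ : ℕ → ℚ)
    (hf : ∀ j, 1 ≤ j → f₀ j = if j = ℓ + 1 then 0 else 1) (n : ℕ) :
    (invert^[m] f₀) (n + 1)
      = ∑ k ∈ Finset.Icc 1 (n + 1),
          ((∑ κ ∈ (Finset.range k).filter (fun κ => (ℓ + 1) * κ ≤ n),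
              (-1 : ℚ) ^ κ * (k.choose κ : ℚ) * ((n - (ℓ + 1) * κ).choose (k - κ - 1) : ℚ))
            + (if n + 1 = (ℓ + 1) * k then (-1 : ℚ) ^ k else 0)) * (m : ℚ) ^ (k - 1) :=
  stmt_11_general ℓ m f₀ hf n
end

section
/- Fix m ≥ 1 and let f₀ : ℕ → ℚ be the sequence f₀(j) = j for j ≥ 1. Then for every n ≥ 1, the m-th invert transform of f₀ satisfies (𝒴^m f₀)(n) = Σ_{k=1}^{n} C(n + k − 1, n − k) · m^(k−1). (For n > 1 this number counts the words of length n − 1 over the alphabet {0, 1, …, m+1} that avoid the pattern 01.) -/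
/-! With `D_q = (1 - t)² - q t`, the generating function `∑ₙ Bₙ(q) tⁿ` of the Morgan–Voyce
polynomials `Bₙ(q) = ∑ₖ C(n+k+1, 2k+1) qᵏ` is `1 / D_q`; this follows from the Pascal-type
recurrences `Bₙ₊₁ = Bₙ + bₙ₊₁`, `bₙ₊₁ = bₙ + q Bₙ` with the companion polynomials
`bₙ(q) = ∑ₖ C(n+k, 2k) qᵏ`. On generating functions the invert transform reads
`1 + 𝒴x = 1 / (1 - x)`, and `1 / (1 - t / D_q) = D_q / D_{q+1}` because `D_{q+1} = D_q - t`;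
so `𝒴` sends `t / D_q` to `t / D_{q+1}`. Since `∑ j tʲ = t / (1 - t)² = t / D_0`, the `m`-th
iterate is `t / D_m`, and `B_{n-1}(m)` is the sum in the statement.
Sequences indexed from 1 are encoded by their shifted power series `∑ₙ x (n+1) tⁿ`. -/

section MorganVoyce

open Finset

variable {R : Type*} [CommSemiring R]

def morganVoyceB (n : ℕ) (x : R) : R :=
  ∑ k ∈ range (n + 1), ((n + k + 1).choose (2 * k + 1) : R) * x ^ k

def morganVoyceb (n : ℕ) (x : R) : R :=
  ∑ k ∈ range (n + 1), ((n + k).choose (2 * k) : R) * x ^ k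

@[simp] lemma morganVoyceB_zero (x : R) : morganVoyceB 0 x = 1 := by simp [morganVoyceB]

@[simp] lemma morganVoyceb_zero (x : R) : morganVoyceb 0 x = 1 := by simp [morganVoyceb]

lemma morganVoyceB_succ (n : ℕ) (x : R) :
    morganVoyceB (n + 1) x = morganVoyceB n x + morganVoyceb (n + 1) x := by
  have pascal (k : ℕ) : (n + 1 + k + 1).choose (2 * k + 1)
      = (n + 1 + k).choose (2 * k) + (n + k + 1).choose (2 * k + 1) := by
    rw [Nat.choose_succ_succ, Nat.add_right_comm n 1 k]
  simp only [morganVoyceB, morganVoyceb, pascal, Nat.cast_add, add_mul, sum_add_distrib]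
  rw [add_comm, sum_range_succ _ (n + 1),
    Nat.choose_eq_zero_of_lt (by omega : n + (n + 1) + 1 < 2 * (n + 1) + 1)]
  simp

lemma morganVoyceb_eq_one_add (n : ℕ) (x : R) :
    morganVoyceb n x = 1 + ∑ k ∈ range n, ((n + k + 1).choose (2 * k + 2) : R) * x ^ (k + 1) := by
  rw [morganVoyceb, sum_range_succ', add_comm]
  simp [Nat.add_assoc, Nat.mul_add]

lemma morganVoyceb_succ (n : ℕ) (x : R) :
    morganVoyceb (n + 1) x = morganVoyceb n x + x * morganVoyceB n x := by
  have pascal (k : ℕ) : (n + 1 + k + 1).choose (2 * k + 2)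
      = (n + k + 1).choose (2 * k + 1) + (n + k + 1).choose (2 * k + 2) := by
    rw [Nat.add_right_comm n 1 k]
    exact Nat.choose_succ_succ (n + k + 1) (2 * k + 1)
  have last_term : ((n + n + 1).choose (2 * n + 2) : R) = 0 := by
    rw [Nat.choose_eq_zero_of_lt (by omega), Nat.cast_zero]
  rw [morganVoyceb_eq_one_add, morganVoyceb_eq_one_add, morganVoyceB, mul_sum]
  simp only [mul_left_comm x _ (x ^ _), ← pow_succ', pascal, Nat.cast_add, add_mul,
    sum_add_distrib, sum_range_succ _ n, last_term]
  ring

lemma morganVoyceB_zero_right (n : ℕ) : morganVoyceB n (0 : R) = n + 1 := by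
  rw [morganVoyceB, sum_range_succ']
  simp [add_comm]

lemma morganVoyceB_eq_sum_Icc (n : ℕ) (x : R) :
    morganVoyceB n x
      = ∑ k ∈ Icc 1 (n + 1), ((n + 1 + k - 1).choose (n + 1 - k) : R) * x ^ (k - 1) := by
  rw [← Ico_add_one_right_eq_Icc, sum_Ico_eq_sum_range, Nat.add_sub_cancel, morganVoyceB]
  refine sum_congr rfl fun k hk => ?_
  have hk : n + 1 + (1 + k) - 1 = n + 1 - (1 + k) + (2 * k + 1) := by
    have := mem_range.1 hk
    omega
  rw [Nat.choose_symm_of_eq_add hk]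
  simp [Nat.add_comm 1 k, Nat.add_right_comm]

end MorganVoyce

section GeneratingFunction

open PowerSeries

variable {R : Type*} [CommRing R]

noncomputable def morganVoyceDenom (x : R) : R⟦X⟧ := (1 - X) ^ 2 - C x * X

lemma morganVoyceDenom_add_one (x : R) : morganVoyceDenom (x + 1) = morganVoyceDenom x - X := by
  rw [morganVoyceDenom, morganVoyceDenom, map_add, map_one]
  ring

lemma mk_morganVoyceB_mul_denom (x : R) :
    mk (morganVoyceB · x) * morganVoyceDenom x = 1 := by
  have hB : mk (morganVoyceB · x) = X * mk (morganVoyceB · x) + mk (morganVoyceb · x) := by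
    ext (_ | n) <;> simp [coeff_succ_X_mul, morganVoyceB_succ]
  have hb : mk (morganVoyceb · x)
      = 1 + X * mk (morganVoyceb · x) + C x * (X * mk (morganVoyceB · x)) := by
    ext (_ | n) <;> simp [coeff_succ_X_mul, morganVoyceb_succ]
  rw [morganVoyceDenom]
  linear_combination (1 - X) * hB + hb

end GeneratingFunction

section Invert

open PowerSeries

lemma mk_invert_succ (x : ℕ → ℚ) :
    mk (fun n => invert x (n + 1))
      = mk (fun n => x (n + 1)) * (1 + X * mk (fun n => invert x (n + 1))) := by
  ext n
  rw [coeff_mul, Finset.Nat.sum_antidiagonal_eq_sum_range_succ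
    (fun i j => coeff i (mk fun n => x (n + 1)) * coeff j (1 + X * mk fun n => invert x (n + 1))),
    Finset.sum_range_succ, coeff_mk, invert, add_comm]
  congr 1
  · refine Finset.sum_congr rfl fun j hj => ?_
    obtain ⟨i, hi⟩ : ∃ i, n - j = i + 1 := ⟨n - j - 1, by grind⟩
    simp [hi, coeff_succ_X_mul]
  · simp

lemma mk_invert_succ_mul_denom {x : ℕ → ℚ} {q : ℚ}
    (hx : mk (fun n => x (n + 1)) * morganVoyceDenom q = 1) :
    mk (fun n => invert x (n + 1)) * morganVoyceDenom (q + 1) = 1 := by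
  rw [morganVoyceDenom_add_one]
  linear_combination (1 + X * mk fun n => invert x (n + 1)) * hx
    + morganVoyceDenom q * mk_invert_succ x

lemma mk_iterate_invert_mul_denom (f₀ : ℕ → ℚ) (hf : ∀ j, 1 ≤ j → f₀ j = (j : ℚ)) (m : ℕ) :
    mk (fun n => (invert^[m] f₀) (n + 1)) * morganVoyceDenom (m : ℚ) = 1 := by
  induction m with
  | zero =>
    have hf' : (fun n => f₀ (n + 1)) = (morganVoyceB · (0 : ℚ)) := by
      ext n
      rw [hf (n + 1) n.succ_pos, morganVoyceB_zero_right, Nat.cast_succ]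
    simpa [hf'] using mk_morganVoyceB_mul_denom (0 : ℚ)
  | succ m ih =>
    rw [Function.iterate_succ_apply', Nat.cast_succ]
    exact mk_invert_succ_mul_denom ih

end Invert

theorem stmt_12_general (m : ℕ) (f₀ : ℕ → ℚ)
    (hf : ∀ j, 1 ≤ j → f₀ j = (j : ℚ)) (n : ℕ) (hn : 1 ≤ n) :
    (invert^[m] f₀) n
      = ∑ k ∈ Finset.Icc 1 n, ((n + k - 1).choose (n - k) : ℚ) * (m : ℚ) ^ (k - 1) := by
  obtain ⟨n, rfl⟩ : ∃ n', n = n' + 1 := ⟨n - 1, by omega⟩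
  have hseries : PowerSeries.mk (fun n => (invert^[m] f₀) (n + 1))
      = PowerSeries.mk (morganVoyceB · (m : ℚ)) :=
    left_inv_eq_right_inv (mk_iterate_invert_mul_denom f₀ hf m)
      ((mul_comm _ _).trans (mk_morganVoyceB_mul_denom (m : ℚ)))
  simpa only [PowerSeries.coeff_mk, morganVoyceB_eq_sum_Icc] using
    congrArg (PowerSeries.coeff n) hseries

/-- For `f₀ j = j` and `m ≥ 1`:
`(𝒴^m f₀)(n) = ∑_{k=1}^{n} C(n+k-1, n-k) m^(k-1)`,
which for `n > 1` counts the `01`-avoiding words of length `n-1` over `{0,…,m+1}`. -/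
theorem stmt_12 (m : ℕ) (hm : 1 ≤ m) (f₀ : ℕ → ℚ)
    (hf : ∀ j, 1 ≤ j → f₀ j = (j : ℚ)) (n : ℕ) (hn : 1 ≤ n) :
    (invert^[m] f₀) n
      = ∑ k ∈ Finset.Icc 1 n, ((n + k - 1).choose (n - k) : ℚ) * (m : ℚ) ^ (k - 1) :=
  stmt_12_general m f₀ hf n hn
end

section
/- For every n ≥ 0, the following identity of polynomials in ℚ[x] holds: U_n composed with (x + 2)/2 equals Σ_{k=0}^{n} C(n + k + 1, n − k) · x^k, where U_n is the n-th Chebyshev polynomial of the second kind. -/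
open Polynomial

noncomputable def S (n : ℕ) : ℚ[X] :=
  ∑ k ∈ Finset.range (n + 1), C (((n + k + 1).choose (n - k) : ℚ)) * X ^ k

lemma divfact : ((X + C 2 : ℚ[X]) / C 2) = C (2⁻¹) * (X + C 2) := by
  rw [Polynomial.div_def]
  have h1 : ((C 2 : ℚ[X]).leadingCoeff)⁻¹ = 2⁻¹ := by simp
  rw [h1]
  have h2 : (C 2 : ℚ[X]) * C 2⁻¹ = 1 := by rw [← Polynomial.C_mul]; norm_num
  rw [h2, Polynomial.divByMonic_one]

lemma coeffS (n m : ℕ) :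
    (S n).coeff m = if m ≤ n then (((n + m + 1).choose (n - m) : ℚ)) else 0 := by
  simp only [S, Polynomial.finset_sum_coeff, Polynomial.coeff_C_mul, Polynomial.coeff_X_pow,
    mul_ite, mul_one, mul_zero]
  rw [Finset.sum_ite_eq (Finset.range (n+1)) m]
  simp [Nat.lt_succ_iff]

lemma pascal (j k : ℕ) :
    ((2*k+j+3).choose (j+2) : ℚ) + (2*k+j+1).choose j
      = (2*k+j+1).choose (j+2) + 2 * (2*k+j+2).choose (j+1) := by
  have h1 : (2*k+j+3).choose (j+2) = (2*k+j+2).choose (j+1) + (2*k+j+2).choose (j+2) :=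
    Nat.choose_succ_succ _ _
  have h2 : (2*k+j+2).choose (j+2) = (2*k+j+1).choose (j+1) + (2*k+j+1).choose (j+2) :=
    Nat.choose_succ_succ _ _
  have h3 : (2*k+j+2).choose (j+1) = (2*k+j+1).choose j + (2*k+j+1).choose (j+1) :=
    Nat.choose_succ_succ _ _
  push_cast [h1, h2, h3]
  ring

lemma Srec (n : ℕ) : S (n+2) = (X + C 2) * S (n+1) - S n := by
  ext m
  rw [Polynomial.coeff_sub, add_mul, Polynomial.coeff_add, coeffS]
  have h2 : ((C 2 : ℚ[X]) * S (n+1)).coeff m = 2 * (S (n+1)).coeff m := by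
    simp
  rw [h2, coeffS, coeffS]
  cases m with
  | zero =>
    simp [Polynomial.coeff_X_mul]
    push_cast
    ring
  | succ m =>
    rw [Polynomial.coeff_X_mul, coeffS]
    split_ifs with h1a h2a h3a h4a <;> try omega
    · -- m ≤ n+1, m+1 ≤ n+1, m+1 ≤ n : general case, k = m+1, j = n - (m+1)
      obtain ⟨j, rfl⟩ : ∃ j, n = (m+1) + j := ⟨n - (m+1), by omega⟩
      have e1 : m + 1 + j + 2 + (m + 1) + 1 = 2*(m+1)+j+3 := by ring
      have e2 : m + 1 + j + 2 - (m+1) = j + 2 := by omega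
      have e3 : m + 1 + j + (m+1) + 1 = 2*(m+1)+j+1 := by omega
      have e4 : m + 1 + j - (m+1) = j := by omega
      have e5 : m + 1 + j + 1 + m + 1 = 2*(m+1)+j+1 := by omega
      have e6 : m + 1 + j + 1 - m = j + 1 + 1 := by omega
      have e7 : m + 1 + j + 1 + (m+1) + 1 = 2*(m+1)+j+2 := by omega
      have e8 : m + 1 + j + 1 - (m+1) = j + 1 := by omega
      rw [e1, e2, e3, e4, e5, e6, e7, e8]
      have := pascal (j) (m+1)
      push_cast at this ⊢
      linarith
    · -- m = n
      obtain rfl : m = n := by omega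
      have e1 : m + 2 + (m+1) + 1 = 2*m+4 := by ring
      have e2 : m + 2 - (m+1) = 1 := by omega
      have e3 : m + 1 + m + 1 = 2*m+2 := by omega
      have e4 : m + 1 - m = 1 := by omega
      have e5 : m + 1 + (m+1) + 1 = 2*m+3 := by omega
      have e6 : m + 1 - (m+1) = 0 := by omega
      rw [e1, e2, e3, e4, e5, e6]
      simp [Nat.choose_one_right]
      push_cast
      ring
    · -- m = n+1
      obtain rfl : m = n + 1 := by omega
      have e1 : n + 2 + (n+2) + 1 = 2*n+5 := by ring
      have e2 : n + 2 - (n+2) = 0 := by omega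
      have e3 : n + 1 + (n+1) + 1 = 2*n+3 := by omega
      have e4 : n + 1 - (n+1) = 0 := by omega
      rw [e1, e2, e3, e4]
      simp
    · simp

/-- The identity `U_n((x+2)/2) = ∑_{k=0}^n C(n+k+1, n-k) x^k` for the Chebyshev
polynomials of the second kind, in `ℚ[X]`. -/
theorem stmt_13 (n : ℕ) :
    (Polynomial.Chebyshev.U ℚ (n : ℤ)).comp ((X + C 2) / C 2)
      = ∑ k ∈ Finset.range (n + 1), C (((n + k + 1).choose (n - k) : ℚ)) * X ^ k := by
  have key : ∀ n : ℕ, (Polynomial.Chebyshev.U ℚ (n : ℤ)).comp ((X + C 2) / C 2) = S n := by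
    intro n
    induction n using Nat.twoStepInduction with
    | zero =>
      simp [Polynomial.Chebyshev.U_zero, S]
    | one =>
      rw [divfact]
      simp only [Nat.cast_one, Polynomial.Chebyshev.U_one, S]
      rw [Finset.sum_range_succ, Finset.sum_range_succ, Finset.sum_range_zero]
      norm_num
      rw [show (2:ℚ[X]) = C 2 from (map_ofNat Polynomial.C 2).symm, ← mul_assoc, ← Polynomial.C_mul]
      norm_num
      ring
    | more n ih1 ih2 =>
      have hc : ((n + 2 : ℕ) : ℤ) = (n : ℤ) + 2 := by push_cast; ring
      rw [show ((n+1:ℕ):ℤ) = (n:ℤ)+1 from by push_cast; ring] at ih2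
      rw [hc, Polynomial.Chebyshev.U_add_two, sub_comp, mul_comp, mul_comp, ofNat_comp, X_comp,
        ih1, ih2, Srec, divfact]
      congr 1
      rw [show ((2:ℕ):ℚ[X]) = C 2 from (map_ofNat Polynomial.C 2).symm, ← mul_assoc, ← Polynomial.C_mul]
      norm_num
  rw [key n]; rfl
end

section
/- Fix ℓ > 1 and integers n ≥ k ≥ 1 with ℓ dividing n − k, and set a = (n − k)/ℓ. Let z be the sequence with z₁ = 1!, z_{ℓ+1} = (ℓ+1)!, and z_j = 0 for all other j. Then B_{n,k}(z₁, z₂, …) = C(n, n − k + a) · (n − k + a)! / a!. -/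
/-- Bell identity 2: for `ℓ > 1`, `n ≥ k ≥ 1` with `ℓ ∣ n - k` and `a = (n-k)/ℓ`,
`B_{n,k}(1!, 0, …, 0, (ℓ+1)!, 0, …) = C(n, n-k+a) (n-k+a)!/a!`. -/
theorem stmt_17 (ℓ : ℕ) (hℓ : 1 < ℓ) (n k : ℕ) (hk : 1 ≤ k) (hkn : k ≤ n)
    (hdvd : ℓ ∣ (n - k)) (a : ℕ) (ha : a = (n - k) / ℓ)
    (z : ℕ → ℚ) (hz : ∀ j, 1 ≤ j → z j = if j = 1 ∨ j = ℓ + 1 then (j.factorial : ℚ) else 0) :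
    partialBell n k z
      = (n.choose (n - k + a) : ℚ) * ((n - k + a).factorial : ℚ) / (a.factorial : ℚ) := by
  unfold partialBell
  have hla : ℓ * a = n - k := ha ▸ Nat.mul_div_cancel' hdvd
  have hn1 : 1 ≤ n := hk.trans hkn
  have h1mem : (1 : ℕ) ∈ Finset.range (n+1) := by simp; omega
  have hz1 : z 1 / ((Nat.factorial 1 : ℕ) : ℚ) = 1 := by
    rw [hz 1 le_rfl, if_pos (Or.inl rfl)]; norm_num
  have hzl : z (ℓ+1) / ((Nat.factorial (ℓ+1) : ℕ) : ℚ) = 1 := by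
    rw [hz (ℓ+1) (by omega), if_pos (Or.inr rfl)]
    exact div_self (Nat.cast_ne_zero.2 (Nat.factorial_ne_zero _))
  have hzo : ∀ i, i ≠ 0 → i ≠ 1 → i ≠ ℓ+1 → z i = 0 := by
    intro i h0 h1 h2
    rw [hz i (by omega), if_neg (by tauto)]
  -- generic splitting of sums over range (n+1) for functions vanishing off {1, ℓ+1}
  have hsplit : ∀ (g : ℕ → ℕ), (∀ i ∈ Finset.range (n+1), i ≠ 1 → i ≠ ℓ+1 → g i = 0) →
      (ℓ+1 > n → g (ℓ+1) = 0) → ∑ i ∈ Finset.range (n+1), g i = g 1 + g (ℓ+1) := by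
    intro g hg hg'
    by_cases hl : ℓ + 1 ≤ n
    · rw [← Finset.add_sum_erase _ g h1mem,
        ← Finset.add_sum_erase _ g (show ℓ+1 ∈ (Finset.range (n+1)).erase 1 by simp; omega)]
      have hrest : ∑ i ∈ ((Finset.range (n+1)).erase 1).erase (ℓ+1), g i = 0 := by
        apply Finset.sum_eq_zero
        intro i hi
        simp only [Finset.mem_erase, Finset.mem_range] at hi
        exact hg i (by simp; omega) hi.2.1 hi.1
      rw [hrest, add_zero]
    · have hgl : g (ℓ+1) = 0 := hg' (by omega)
      rw [← Finset.add_sum_erase _ g h1mem]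
      have hrest : ∑ i ∈ (Finset.range (n+1)).erase 1, g i = 0 := by
        apply Finset.sum_eq_zero
        intro i hi
        simp only [Finset.mem_erase, Finset.mem_range] at hi
        exact hg i (by simp; omega) hi.1 (by omega)
      rw [hrest, hgl, add_zero]
  have hprodsplit : ∀ (g : ℕ → ℚ), (∀ i ∈ Finset.range (n+1), i ≠ 1 → i ≠ ℓ+1 → g i = 1) →
      (ℓ+1 > n → g (ℓ+1) = 1) → ∏ i ∈ Finset.range (n+1), g i = g 1 * g (ℓ+1) := by
    intro g hg hg'
    by_cases hl : ℓ + 1 ≤ n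
    · rw [← Finset.mul_prod_erase _ g h1mem,
        ← Finset.mul_prod_erase _ g (show ℓ+1 ∈ (Finset.range (n+1)).erase 1 by simp; omega)]
      have hrest : ∏ i ∈ ((Finset.range (n+1)).erase 1).erase (ℓ+1), g i = 1 := by
        apply Finset.prod_eq_one
        intro i hi
        simp only [Finset.mem_erase, Finset.mem_range] at hi
        exact hg i (by simp; omega) hi.2.1 hi.1
      rw [hrest, mul_one]
    · have hgl : g (ℓ+1) = 1 := hg' (by omega)
      rw [← Finset.mul_prod_erase _ g h1mem]
      have hrest : ∏ i ∈ (Finset.range (n+1)).erase 1, g i = 1 := by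
        apply Finset.prod_eq_one
        intro i hi
        simp only [Finset.mem_erase, Finset.mem_range] at hi
        exact hg i (by simp; omega) hi.1 (by omega)
      rw [hrest, hgl, mul_one]
  -- structure lemma: any β in the sum set with vanishing off {1, ℓ+1} has β (ℓ+1) = a, β 1 = k - a
  have hstruct : ∀ β : ℕ →₀ ℕ,
      β ∈ ((Finset.range (n + 1)).finsuppAntidiag k).filter
        (fun α => (∑ i ∈ Finset.range (n + 1), i * α i) = n ∧ α 0 = 0) →
      (∀ i ∈ Finset.range (n+1), i ≠ 1 → i ≠ ℓ+1 → β i = 0) →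
      β (ℓ+1) = a ∧ β 1 + β (ℓ+1) = k := by
    intro β hβ hv
    simp only [Finset.mem_filter, Finset.mem_finsuppAntidiag] at hβ
    obtain ⟨⟨hs, hsupp⟩, hw, h0⟩ := hβ
    have hout : ∀ i, n+1 ≤ i → β i = 0 := by
      intro i hi
      by_contra hne
      exact absurd (Finset.mem_range.1 (hsupp (Finsupp.mem_support_iff.2 hne))) (by omega)
    have e1 : β 1 + β (ℓ+1) = k := by
      rw [← hs]
      exact (hsplit (fun i => β i) hv (fun h => hout _ (by omega))).symm
    have e2 : 1 * β 1 + (ℓ+1) * β (ℓ+1) = n := by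
      rw [← hw]
      exact (hsplit (fun i => i * β i)
        (fun i hi h1 h2 => by show i * β i = 0; rw [hv i hi h1 h2, mul_zero])
        (fun h => by show (ℓ+1) * β (ℓ+1) = 0; rw [hout _ (by omega), mul_zero])).symm
    have e3 : ℓ * β (ℓ+1) = ℓ * a := by
      rw [hla]
      have : (ℓ+1) * β (ℓ+1) = ℓ * β (ℓ+1) + β (ℓ+1) := by ring
      omega
    have e4 : β (ℓ+1) = a := Nat.eq_of_mul_eq_mul_left (by omega) e3
    exact ⟨e4, e1⟩
  -- zero term lemma: if β has support off {1, ℓ+1}, its term vanishes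
  have hzero : ∀ β : ℕ →₀ ℕ, β 0 = 0 →
      (¬ ∀ i ∈ Finset.range (n+1), i ≠ 1 → i ≠ ℓ+1 → β i = 0) →
      ((n.factorial : ℚ) / ∏ i ∈ Finset.range (n + 1), ((β i).factorial : ℚ)) *
        ∏ i ∈ Finset.range (n + 1), (z i / (i.factorial : ℚ)) ^ β i = 0 := by
    intro β h0 hbad
    push_neg at hbad
    obtain ⟨i, hi, h1, h2, hne⟩ := hbad
    have hi0 : i ≠ 0 := by rintro rfl; exact hne h0
    have : (z i / (i.factorial : ℚ)) ^ β i = 0 := by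
      rw [hzo i hi0 h1 h2, zero_div, zero_pow hne]
    rw [show ∏ i ∈ Finset.range (n + 1), (z i / (i.factorial : ℚ)) ^ β i = 0 from
      Finset.prod_eq_zero hi this, mul_zero]
  by_cases hak : a ≤ k
  · -- the singleton case
    set α₀ : ℕ →₀ ℕ := Finsupp.single 1 (k - a) + Finsupp.single (ℓ+1) a with hα₀
    have hla' : a ≠ 0 → ℓ + 1 ≤ n := by
      intro h
      have h2 : ℓ ≤ ℓ * a := Nat.le_mul_of_pos_right ℓ (Nat.pos_of_ne_zero h)
      omega
    have hv1 : α₀ 1 = k - a := by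
      rw [hα₀, Finsupp.add_apply, Finsupp.single_apply, Finsupp.single_apply,
        if_pos rfl, if_neg (by omega : ¬ ℓ + 1 = 1), add_zero]
    have hvl : α₀ (ℓ+1) = a := by
      rw [hα₀, Finsupp.add_apply, Finsupp.single_apply, Finsupp.single_apply,
        if_neg (by omega : ¬ (1:ℕ) = ℓ + 1), if_pos rfl, zero_add]
    have hvo : ∀ i, i ≠ 1 → i ≠ ℓ+1 → α₀ i = 0 := by
      intro i h1 h2
      rw [hα₀, Finsupp.add_apply, Finsupp.single_apply, Finsupp.single_apply,
        if_neg (by omega : ¬ (1:ℕ) = i), if_neg (by omega : ¬ ℓ + 1 = i), add_zero]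
    have hvo' : ∀ i ∈ Finset.range (n+1), i ≠ 1 → i ≠ ℓ+1 → α₀ i = 0 := fun i _ => hvo i
    have hlz : ℓ + 1 > n → a = 0 := by
      intro h; by_contra h'; exact absurd (hla' h') (by omega)
    have hmem : α₀ ∈ ((Finset.range (n + 1)).finsuppAntidiag k).filter
        (fun α => (∑ i ∈ Finset.range (n + 1), i * α i) = n ∧ α 0 = 0) := by
      simp only [Finset.mem_filter, Finset.mem_finsuppAntidiag]
      refine ⟨⟨?_, ?_⟩, ?_, hvo 0 (by omega) (by omega)⟩
      · rw [hsplit (fun i => α₀ i) hvo'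
          (fun h => by show α₀ (ℓ+1) = 0; rw [hvl]; exact hlz h)]
        show α₀ 1 + α₀ (ℓ+1) = k
        rw [hv1, hvl]; omega
      · intro i hi
        rw [Finsupp.mem_support_iff] at hi
        by_contra h
        have hi1 : i ≠ 1 := by rintro rfl; simp at h; omega
        have hil : i ≠ ℓ+1 := by
          rintro rfl; exact absurd (hla' (by rw [← hvl]; exact hi)) (by simp at h; omega)
        exact hi (hvo i hi1 hil)
      · rw [hsplit (fun i => i * α₀ i)
          (fun i hi h1 h2 => by show i * α₀ i = 0; rw [hvo i h1 h2, mul_zero])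
          (fun h => by show (ℓ+1) * α₀ (ℓ+1) = 0; rw [hvl, hlz h, mul_zero])]
        show 1 * α₀ 1 + (ℓ+1) * α₀ (ℓ+1) = n
        rw [hv1, hvl]
        have e : (ℓ+1) * a = ℓ * a + a := by ring
        omega
    have huniq : ∀ β ∈ ((Finset.range (n + 1)).finsuppAntidiag k).filter
        (fun α => (∑ i ∈ Finset.range (n + 1), i * α i) = n ∧ α 0 = 0), β ≠ α₀ →
        ((n.factorial : ℚ) / ∏ i ∈ Finset.range (n + 1), ((β i).factorial : ℚ)) *
          ∏ i ∈ Finset.range (n + 1), (z i / (i.factorial : ℚ)) ^ β i = 0 := by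
      intro β hβ hne
      by_cases hgood : ∀ i ∈ Finset.range (n+1), i ≠ 1 → i ≠ ℓ+1 → β i = 0
      · exfalso
        obtain ⟨e4, e1⟩ := hstruct β hβ hgood
        apply hne
        simp only [Finset.mem_filter, Finset.mem_finsuppAntidiag] at hβ
        obtain ⟨⟨hs, hsupp⟩, hw, h0⟩ := hβ
        have hout : ∀ i, n+1 ≤ i → β i = 0 := by
          intro i hi
          by_contra hne'
          exact absurd (Finset.mem_range.1 (hsupp (Finsupp.mem_support_iff.2 hne'))) (by omega)
        ext i
        by_cases h1 : i = 1
        · subst h1; rw [hv1]; omega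
        by_cases h2 : i = ℓ+1
        · subst h2; rw [hvl]; exact e4
        rw [hvo i h1 h2]
        by_cases hr : i ∈ Finset.range (n+1)
        · exact hgood i hr h1 h2
        · exact hout i (by simp at hr; omega)
      · have h0 : β 0 = 0 := ((Finset.mem_filter.1 hβ).2).2
        exact hzero β h0 hgood
    rw [Finset.sum_eq_single_of_mem α₀ hmem huniq]
    · -- compute the value at α₀
      have hfac : ∏ i ∈ Finset.range (n + 1), (((α₀ i).factorial : ℕ) : ℚ)
          = ((k-a).factorial : ℚ) * (a.factorial : ℚ) := by
        rw [hprodsplit (fun i => (((α₀ i).factorial : ℕ) : ℚ))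
          (fun i hi h1 h2 => by show (((α₀ i).factorial : ℕ) : ℚ) = 1; rw [hvo i h1 h2]; norm_num)
          (fun h => by show (((α₀ (ℓ+1)).factorial : ℕ) : ℚ) = 1; rw [hvl, hlz h]; norm_num)]
        rw [hv1, hvl]
      have hzp : ∏ i ∈ Finset.range (n + 1), (z i / ((i.factorial : ℕ) : ℚ)) ^ α₀ i = 1 := by
        rw [hprodsplit (fun i => (z i / ((i.factorial : ℕ) : ℚ)) ^ α₀ i)
          (fun i hi h1 h2 => by
            show (z i / ((i.factorial : ℕ) : ℚ)) ^ α₀ i = 1; rw [hvo i h1 h2, pow_zero])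
          (fun h => by
            show (z (ℓ+1) / (((ℓ+1).factorial : ℕ) : ℚ)) ^ α₀ (ℓ+1) = 1
            rw [hvl, hlz h, pow_zero])]
        show (z 1 / ((Nat.factorial 1 : ℕ) : ℚ)) ^ α₀ 1
          * (z (ℓ+1) / (((ℓ+1).factorial : ℕ) : ℚ)) ^ α₀ (ℓ+1) = 1
        rw [hz1, hzl, one_pow, one_pow, mul_one]
      rw [hfac, hzp, mul_one]
      -- final arithmetic
      have hmn : n - k + a ≤ n := by omega
      have hcf := Nat.choose_mul_factorial_mul_factorial hmn
      rw [(by omega : n - (n - k + a) = k - a)] at hcf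
      have hcf' : ((n.choose (n-k+a) : ℕ) : ℚ) * ((n-k+a).factorial : ℚ) * ((k-a).factorial : ℚ)
          = (n.factorial : ℚ) := by exact_mod_cast congrArg (Nat.cast : ℕ → ℚ) hcf
      have f1 : ((k-a).factorial : ℚ) ≠ 0 := Nat.cast_ne_zero.2 (Nat.factorial_ne_zero _)
      have f2 : ((a.factorial : ℕ) : ℚ) ≠ 0 := Nat.cast_ne_zero.2 (Nat.factorial_ne_zero _)
      rw [div_eq_div_iff (by positivity) f2]
      linear_combination (-((a.factorial : ℕ) : ℚ)) * hcf'
  · rw [Finset.sum_eq_zero]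
    · rw [Nat.choose_eq_zero_of_lt (by omega)]
      simp
    · intro β hβ
      by_cases hgood : ∀ i ∈ Finset.range (n+1), i ≠ 1 → i ≠ ℓ+1 → β i = 0
      · obtain ⟨e4, e1⟩ := hstruct β hβ hgood
        omega
      · have h0 : β 0 = 0 := ((Finset.mem_filter.1 hβ).2).2
        exact hzero β h0 hgood
end
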